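/- arXiv:1702.08697 — 8 statements merged into one kernel-verified Lean document; each statement's English description precedes it below -/
import Mathlib

section
/- Let $a<b$ and let $g:[a,b]\to\mathbb{R}$ be continuous with $g(t)>0$ for all $t$. If $w:[a,b]\to\mathbb{R}$ is continuous and is a viscosity solution of $|w'|=g$ on $(a,b)$, then for every $t_0\in(a,b)$: $w$ attains a local maximum at $t_0$ if and only if $w$ is not differentiable at $t_0$. -/
/-!
Testing with lines `t ↦ ℓ t` shows that `w - ℓ t` has no interior local maximum where `g < |ℓ|`
and no interior local minimum where `|ℓ| < g`; testing with parabolas shows that `|w'| = g`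
wherever `w` is differentiable. At a local maximum a derivative would vanish, contradicting
`|w'| = g > 0`.

Conversely, since `g > 0` the function `w` has no local minimum at all, so if `t₀` is not a local
maximum then `w` is monotone near `t₀`; reflecting `t ↦ -t` if needed, it is nondecreasing.
If some chord of `w` near `t₀` had slope above `g t₀ + ε` (or below `g t₀ - ε`), the line test
with a slope `ℓ` in between would force `w - ℓ t` to be strictly monotone on a whole interval,
and at a point of that interval where it is differentiable (Lebesgue) `|w'|` would miss `g`.
So all chords of `w` near `t₀` have slope close to `g t₀`, i.e. `w' t₀ = g t₀`.
-/

open Set Filter Topology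

/-- `w` is a viscosity subsolution of `|w'| = g` on `(a,b)`. -/
def ViscositySubsolution (a b : ℝ) (g w : ℝ → ℝ) : Prop :=
  ∀ t0 ∈ Set.Ioo a b, ∀ φ : ℝ → ℝ, Differentiable ℝ φ →
    IsLocalMax (fun t => w t - φ t) t0 → |deriv φ t0| ≤ g t0

/-- `w` is a viscosity supersolution of `|w'| = g` on `(a,b)`. -/
def ViscositySupersolution (a b : ℝ) (g w : ℝ → ℝ) : Prop :=
  ∀ t0 ∈ Set.Ioo a b, ∀ φ : ℝ → ℝ, Differentiable ℝ φ →
    IsLocalMin (fun t => w t - φ t) t0 → g t0 ≤ |deriv φ t0|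

section RealFunctions

variable {f : ℝ → ℝ}

lemma lt_max_of_forall_not_isLocalMax {x y z : ℝ} (hf : ContinuousOn f (Icc x z))
    (hmax : ∀ τ ∈ Ioo x z, ¬IsLocalMax f τ) (hxy : x < y) (hyz : y < z) :
    f y < max (f x) (f z) := by
  by_contra! hle
  obtain ⟨τ, hτ, hτmax⟩ :=
    isCompact_Icc.exists_isMaxOn (nonempty_Icc.2 (hxy.trans hyz).le) hf
  have hinterior : ∃ σ ∈ Ioo x z, IsMaxOn f (Icc x z) σ := by
    rcases eq_endpoints_or_mem_Ioo_of_mem_Icc hτ with rfl | rfl | hτ'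
    · exact ⟨y, ⟨hxy, hyz⟩, fun t ht => (hτmax ht).trans ((le_max_left _ _).trans hle)⟩
    · exact ⟨y, ⟨hxy, hyz⟩, fun t ht => (hτmax ht).trans ((le_max_right _ _).trans hle)⟩
    · exact ⟨τ, hτ', hτmax⟩
  obtain ⟨σ, hσ, hσmax⟩ := hinterior
  exact hmax σ hσ (hσmax.isLocalMax (Icc_mem_nhds hσ.1 hσ.2))

lemma min_lt_of_forall_not_isLocalMin {x y z : ℝ} (hf : ContinuousOn f (Icc x z))
    (hmin : ∀ τ ∈ Ioo x z, ¬IsLocalMin f τ) (hxy : x < y) (hyz : y < z) :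
    min (f x) (f z) < f y := by
  have := lt_max_of_forall_not_isLocalMax (f := fun t => -f t) hf.neg
    (fun τ hτ h => hmin τ hτ (by simpa using h.neg)) hxy hyz
  rwa [max_neg_neg, neg_lt_neg_iff] at this

lemma strictMonoOn_Ico_of_forall_not_isLocalMax {p q x y : ℝ} (hf : ContinuousOn f (Ioo p q))
    (hmax : ∀ τ ∈ Ioo p q, ¬IsLocalMax f τ) (hpx : p < x) (hxy : x < y) (hlt : f x < f y) :
    StrictMonoOn f (Ico y q) := by
  have between : ∀ u v w, p < u → u < v → v < w → w < q → f v < max (f u) (f w) :=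
    fun u v w hu huv hvw hw => lt_max_of_forall_not_isLocalMax (hf.mono (Icc_subset_Ioo hu hw))
      (fun τ hτ => hmax τ ⟨hu.trans hτ.1, hτ.2.trans hw⟩) huv hvw
  have hy_le : ∀ z ∈ Ico y q, f y ≤ f z := by
    intro z hz
    rcases hz.1.eq_or_lt with rfl | hyz
    · exact le_rfl
    · exact ((lt_max_iff.1 (between x y z hpx hxy hyz hz.2)).resolve_left hlt.not_gt).le
  intro z₁ hz₁ z₂ hz₂ h₁₂
  exact (lt_max_iff.1 (between x z₁ z₂ hpx (hxy.trans_le hz₁.1) h₁₂ hz₂.2)).resolve_left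
    (hlt.trans_le (hy_le z₁ hz₁)).not_gt

lemma exists_monotoneOn_Ioc_of_lt {a b t₀ t : ℝ} (hf : ContinuousOn f (Icc a b))
    (hmin : ∀ τ ∈ Ioo a b, ¬IsLocalMin f τ) (ht₀ : a < t₀) (ht₀t : t₀ < t) (htb : t < b)
    (hlt : f t₀ < f t) : ∃ m, t₀ < m ∧ MonotoneOn f (Ioc a m) := by
  obtain ⟨m, hm, hmax⟩ := isCompact_Icc.exists_isMaxOn (nonempty_Icc.2 ht₀t.le)
    (hf.mono (Icc_subset_Icc ht₀.le htb.le))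
  have hm₀ : f t₀ < f m := hlt.trans_le (hmax (right_mem_Icc.2 ht₀t.le))
  have ht₀m : t₀ < m := hm.1.lt_of_ne (by rintro rfl; exact lt_irrefl _ hm₀)
  have hmb : m < b := hm.2.trans_lt htb
  have between : ∀ x y, a < x → x < y → y < m → min (f x) (f m) < f y :=
    fun x y hx hxy hym => min_lt_of_forall_not_isLocalMin (hf.mono (Icc_subset_Icc hx.le hmb.le))
      (fun τ hτ => hmin τ ⟨hx.trans hτ.1, hτ.2.trans hmb⟩) hxy hym
  have hle : ∀ x ∈ Ioc a m, f x ≤ f m := by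
    intro x hx
    rcases le_or_gt t₀ x with h | h
    · exact hmax ⟨h, hx.2.trans hm.2⟩
    · have := between x t₀ hx.1 h ht₀m
      exact ((min_lt_iff.1 this).resolve_right hm₀.not_gt).le.trans hm₀.le
  refine ⟨m, ht₀m, fun x hx y hy hxy => ?_⟩
  rcases hy.2.lt_or_eq with hym | rfl
  · rcases hxy.lt_or_eq with hxy | rfl
    · simpa [min_eq_left (hle x hx)] using (between x y hx.1 hxy hym).le
    · exact le_rfl
  · exact hle x hx

lemma HasDerivAt.nonneg_of_monotoneOn {s : Set ℝ} {x c : ℝ} (hd : HasDerivAt f c x)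
    (hf : MonotoneOn f s) (hs : s ∈ 𝓝 x) : 0 ≤ c := by
  have hacc : AccPt x (𝓟 s) := by
    simpa using (PerfectSpace.univ_preperfect x (mem_univ x)).nhds_inter hs
  exact hd.hasDerivWithinAt.nonneg_of_monotoneOn hacc hf

lemma MonotoneOn.exists_hasDerivAt_nonneg {p q : ℝ} (hpq : p < q)
    (hf : MonotoneOn f (Ioo p q)) : ∃ τ ∈ Ioo p q, ∃ c, HasDerivAt f c τ ∧ 0 ≤ c := by
  obtain ⟨τ, hτ, hdiff⟩ := MeasureTheory.Measure.exists_mem_of_measure_ne_zero_of_ae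
    (by simp [hpq] : MeasureTheory.volume (Ioo p q) ≠ 0)
    (hf.ae_differentiableWithinAt measurableSet_Ioo)
  have hd := (hdiff.differentiableAt (Ioo_mem_nhds hτ.1 hτ.2)).hasDerivAt
  exact ⟨τ, hτ, _, hd, hd.nonneg_of_monotoneOn hf (Ioo_mem_nhds hτ.1 hτ.2)⟩

/-- Minimize `f t - (p t - K (t - τ)²)` over a small closed ball around `τ`. -/
lemma exists_isLocalMin_sub_of_hasDerivAt {τ p ε : ℝ} {s U : Set ℝ} (hd : HasDerivAt f p τ)
    (hs : s ∈ 𝓝 τ) (hf : ContinuousOn f s) (hε : 0 < ε) (hU : U ∈ 𝓝 τ) :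
    ∃ σ ∈ U, ∃ φ : ℝ → ℝ, Differentiable ℝ φ ∧ IsLocalMin (fun t => f t - φ t) σ ∧
      |deriv φ σ - p| ≤ ε := by
  have hlin : ∀ᶠ t in 𝓝 τ, |f t - f τ - p * (t - τ)| ≤ ε / 2 * |t - τ| := by
    simpa [Real.norm_eq_abs, smul_eq_mul, mul_comm] using
      (hasDerivAt_iff_isLittleO.mp hd).def (half_pos hε)
  obtain ⟨r, hr, hball⟩ := Metric.nhds_basis_closedBall.mem_iff.1 ((hlin.and hs).and hU)
  set K := ε / r with hK
  set φ : ℝ → ℝ := fun t => p * t - K * (t - τ) ^ 2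
  have hφ : ∀ t, HasDerivAt φ (p - 2 * K * (t - τ)) t := fun t =>
    (((hasDerivAt_id' t).const_mul p).sub
      (((hasDerivAt_id' t).sub_const τ).pow 2 |>.const_mul K)).congr_deriv (by ring)
  have hφc : Continuous φ := continuous_iff_continuousAt.2 fun t => (hφ t).continuousAt
  obtain ⟨σ, hσ, hmin⟩ := (isCompact_closedBall τ r).exists_isMinOn
    (Metric.nonempty_closedBall.2 hr.le)
    ((hf.mono fun t ht => (hball ht).1.2).sub hφc.continuousOn)
  have hKd : K * |σ - τ| ≤ ε / 2 := by
    have hστ : f σ - φ σ ≤ f τ - φ τ := hmin (Metric.mem_closedBall_self hr.le)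
    have hφτ : φ τ = p * τ := by simp [φ]
    have hφσ : φ σ = p * σ - K * (|σ - τ| * |σ - τ|) := by
      simp only [φ, abs_mul_abs_self, sq]
    have hlinσ := (abs_le.1 (hball hσ).1.1).1
    have : K * |σ - τ| * |σ - τ| ≤ ε / 2 * |σ - τ| := by linarith
    rcases (abs_nonneg (σ - τ)).eq_or_lt with h | h
    · rw [← h, mul_zero]; positivity
    · exact le_of_mul_le_mul_right this h
  have hσball : σ ∈ Metric.ball τ r := by
    rw [hK, div_mul_eq_mul_div, div_le_iff₀ hr] at hKd
    rw [Metric.mem_ball, Real.dist_eq]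
    nlinarith
  refine ⟨σ, (hball hσ).2, φ, fun t => (hφ t).differentiableAt,
    hmin.isLocalMin (Metric.closedBall_mem_nhds_of_mem hσball), ?_⟩
  rw [(hφ σ).deriv, show p - 2 * K * (σ - τ) - p = -(2 * K * (σ - τ)) by ring, abs_neg,
    abs_mul, abs_of_pos (by positivity : 0 < 2 * K)]
  linarith

lemma exists_isLocalMax_sub_of_hasDerivAt {τ p ε : ℝ} {s U : Set ℝ} (hd : HasDerivAt f p τ)
    (hs : s ∈ 𝓝 τ) (hf : ContinuousOn f s) (hε : 0 < ε) (hU : U ∈ 𝓝 τ) :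
    ∃ σ ∈ U, ∃ φ : ℝ → ℝ, Differentiable ℝ φ ∧ IsLocalMax (fun t => f t - φ t) σ ∧
      |deriv φ σ - p| ≤ ε := by
  obtain ⟨σ, hσ, φ, hφ, hmin, hderiv⟩ :=
    exists_isLocalMin_sub_of_hasDerivAt hd.neg hs hf.neg hε hU
  refine ⟨σ, hσ, -φ, hφ.neg,
    hmin.neg.congr (.of_forall fun t => by simp only [Pi.neg_apply]; ring), ?_⟩
  rwa [deriv.neg, show -deriv φ σ - p = -(deriv φ σ - -p) by ring, abs_neg]

end RealFunctions

variable {a b : ℝ} {g w : ℝ → ℝ}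

namespace ViscositySubsolution

lemma not_isLocalMax (hsub : ViscositySubsolution a b g w) {τ ℓ : ℝ} (hτ : τ ∈ Ioo a b)
    (hℓ : g τ < |ℓ|) : ¬IsLocalMax (fun t => w t - ℓ * t) τ := fun hmax => by
  have := hsub τ hτ (ℓ * ·) (differentiable_id.const_mul ℓ) hmax
  rw [deriv_const_mul_id'] at this
  linarith

lemma abs_le_of_hasDerivAt (hsub : ViscositySubsolution a b g w)
    (hg : ContinuousOn g (Icc a b)) (hw : ContinuousOn w (Icc a b)) {τ p : ℝ}
    (hτ : τ ∈ Ioo a b) (hd : HasDerivAt w p τ) : |p| ≤ g τ := by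
  by_contra! hlt
  set ε := (|p| - g τ) / 2 with hε
  have hU : {t | t ∈ Ioo a b ∧ g t < g τ + ε} ∈ 𝓝 τ :=
    inter_mem (Ioo_mem_nhds hτ.1 hτ.2)
      ((hg.continuousAt (Icc_mem_nhds hτ.1 hτ.2)).eventually (gt_mem_nhds (by linarith)))
  obtain ⟨σ, hσ, φ, hφ, hmax, hderiv⟩ :=
    exists_isLocalMax_sub_of_hasDerivAt hd (Icc_mem_nhds hτ.1 hτ.2) hw (by linarith) hU
  have hgσ : g σ < g τ + ε := hσ.2
  have := hsub σ hσ.1 φ hφ hmax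
  linarith [abs_sub_abs_le_abs_sub p (deriv φ σ), abs_sub_comm (deriv φ σ) p]

lemma slope_le (hsub : ViscositySubsolution a b g w) (hg : ContinuousOn g (Icc a b))
    (hw : ContinuousOn w (Icc a b)) {p q G : ℝ} (hpq : Ioo p q ⊆ Ioo a b)
    (hG : ∀ τ ∈ Ioo p q, g τ < G) {x y : ℝ} (hx : p < x) (hxy : x < y) (hy : y < q) :
    slope w x y ≤ G := by
  by_contra! hlt
  obtain ⟨ℓ, hGℓ, hℓ⟩ := exists_between hlt
  rw [slope_def_field, lt_div_iff₀ (sub_pos.2 hxy)] at hℓ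
  have hnomax : ∀ τ ∈ Ioo p q, ¬IsLocalMax (fun t => w t - ℓ * t) τ := fun τ hτ =>
    hsub.not_isLocalMax (hpq hτ) ((hG τ hτ).trans (hGℓ.trans_le (le_abs_self ℓ)))
  have hmono : StrictMonoOn (fun t => w t - ℓ * t) (Ico y q) :=
    strictMonoOn_Ico_of_forall_not_isLocalMax
      ((hw.mono (hpq.trans Ioo_subset_Icc_self)).sub (continuousOn_const.mul continuousOn_id))
      hnomax hx hxy (by linarith)
  obtain ⟨τ, hτ, c, hc, hc0⟩ :=
    (hmono.monotoneOn.mono Ioo_subset_Ico_self).exists_hasDerivAt_nonneg hy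
  have hτpq : τ ∈ Ioo p q := ⟨hx.trans (hxy.trans hτ.1), hτ.2⟩
  have hwτ : HasDerivAt w (c + ℓ) τ := by
    simpa using hc.fun_add ((hasDerivAt_id' τ).const_mul ℓ)
  have := hsub.abs_le_of_hasDerivAt hg hw (hpq hτpq) hwτ
  linarith [le_abs_self (c + ℓ), hG τ hτpq]

lemma comp_neg (hsub : ViscositySubsolution a b g w) :
    ViscositySubsolution (-b) (-a) (fun t => g (-t)) (fun t => w (-t)) := by
  intro τ hτ φ hφ hmax
  rw [← neg_neg τ] at hmax
  have hmax' := hmax.comp_continuous continuous_neg.continuousAt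
  simp only [Function.comp_def, neg_neg] at hmax'
  simpa [deriv_comp_neg] using hsub (-τ) ⟨by linarith [hτ.2], by linarith [hτ.1]⟩
    (fun t => φ (-t)) (hφ.comp differentiable_neg) hmax'

end ViscositySubsolution

namespace ViscositySupersolution

lemma not_isLocalMin (hsuper : ViscositySupersolution a b g w) {τ ℓ : ℝ} (hτ : τ ∈ Ioo a b)
    (hℓ : |ℓ| < g τ) : ¬IsLocalMin (fun t => w t - ℓ * t) τ := fun hmin => by
  have := hsuper τ hτ (ℓ * ·) (differentiable_id.const_mul ℓ) hmin
  rw [deriv_const_mul_id'] at this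
  linarith

lemma le_abs_of_hasDerivAt (hsuper : ViscositySupersolution a b g w)
    (hg : ContinuousOn g (Icc a b)) (hw : ContinuousOn w (Icc a b)) {τ p : ℝ}
    (hτ : τ ∈ Ioo a b) (hd : HasDerivAt w p τ) : g τ ≤ |p| := by
  by_contra! hlt
  set ε := (g τ - |p|) / 2 with hε
  have hU : {t | t ∈ Ioo a b ∧ g τ - ε < g t} ∈ 𝓝 τ :=
    inter_mem (Ioo_mem_nhds hτ.1 hτ.2)
      ((hg.continuousAt (Icc_mem_nhds hτ.1 hτ.2)).eventually (lt_mem_nhds (by linarith)))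
  obtain ⟨σ, hσ, φ, hφ, hmin, hderiv⟩ :=
    exists_isLocalMin_sub_of_hasDerivAt hd (Icc_mem_nhds hτ.1 hτ.2) hw (by linarith) hU
  have hgσ : g τ - ε < g σ := hσ.2
  have := hsuper σ hσ.1 φ hφ hmin
  linarith [abs_sub_abs_le_abs_sub (deriv φ σ) p]

lemma le_slope (hsuper : ViscositySupersolution a b g w) (hg : ContinuousOn g (Icc a b))
    (hw : ContinuousOn w (Icc a b)) {p q G : ℝ} (hpq : Ioo p q ⊆ Ioo a b)
    (hmono : MonotoneOn w (Ioo p q)) (hG : ∀ τ ∈ Ioo p q, G < g τ) {x y : ℝ}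
    (hx : p < x) (hxy : x < y) (hy : y < q) : G ≤ slope w x y := by
  by_contra! hlt
  obtain ⟨ℓ, hℓ, hℓG⟩ := exists_between hlt
  have hℓ0 : 0 ≤ ℓ := (hmono.slope_nonneg ⟨hx, hxy.trans hy⟩ ⟨hx.trans hxy, hy⟩).trans hℓ.le
  rw [slope_def_field, div_lt_iff₀ (sub_pos.2 hxy)] at hℓ
  have hnomax : ∀ τ ∈ Ioo p q, ¬IsLocalMax (fun t => ℓ * t - w t) τ := fun τ hτ hmax =>
    hsuper.not_isLocalMin (hpq hτ) ((abs_of_nonneg hℓ0).trans_lt (hℓG.trans (hG τ hτ)))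
      (by simpa using hmax.neg)
  have hanti : StrictMonoOn (fun t => ℓ * t - w t) (Ico y q) :=
    strictMonoOn_Ico_of_forall_not_isLocalMax
      ((continuousOn_const.mul continuousOn_id).sub (hw.mono (hpq.trans Ioo_subset_Icc_self)))
      hnomax hx hxy (by linarith)
  obtain ⟨τ, hτ, c, hc, hc0⟩ :=
    (hanti.monotoneOn.mono Ioo_subset_Ico_self).exists_hasDerivAt_nonneg hy
  have hτpq : τ ∈ Ioo p q := ⟨hx.trans (hxy.trans hτ.1), hτ.2⟩
  have hwτ : HasDerivAt w (ℓ - c) τ := by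
    simpa using ((hasDerivAt_id' τ).const_mul ℓ).fun_sub hc
  have hwτ0 := hwτ.nonneg_of_monotoneOn hmono (Ioo_mem_nhds hτpq.1 hτpq.2)
  have := hsuper.le_abs_of_hasDerivAt hg hw (hpq hτpq) hwτ
  rw [abs_of_nonneg hwτ0] at this
  linarith [hG τ hτpq]

lemma comp_neg (hsuper : ViscositySupersolution a b g w) :
    ViscositySupersolution (-b) (-a) (fun t => g (-t)) (fun t => w (-t)) := by
  intro τ hτ φ hφ hmin
  rw [← neg_neg τ] at hmin
  have hmin' := hmin.comp_continuous continuous_neg.continuousAt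
  simp only [Function.comp_def, neg_neg] at hmin'
  simpa [deriv_comp_neg] using hsuper (-τ) ⟨by linarith [hτ.2], by linarith [hτ.1]⟩
    (fun t => φ (-t)) (hφ.comp differentiable_neg) hmin'

end ViscositySupersolution

lemma hasDerivAt_of_monotoneOn (hsub : ViscositySubsolution a b g w)
    (hsuper : ViscositySupersolution a b g w) (hg : ContinuousOn g (Icc a b))
    (hw : ContinuousOn w (Icc a b)) {t₀ : ℝ} (ht₀ : t₀ ∈ Ioo a b) {U : Set ℝ} (hU : U ∈ 𝓝 t₀)
    (hmono : MonotoneOn w U) : HasDerivAt w (g t₀) t₀ := by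
  have hgt₀ : ContinuousAt g t₀ := hg.continuousAt (Icc_mem_nhds ht₀.1 ht₀.2)
  have interval : ∀ P : ℝ → Prop, (∀ᶠ τ in 𝓝 t₀, P τ) → ∃ p q, t₀ ∈ Ioo p q ∧
      Ioo p q ⊆ Ioo a b ∧ MonotoneOn w (Ioo p q) ∧ ∀ τ ∈ Ioo p q, P τ := by
    intro P hP
    obtain ⟨p, q, ht₀pq, hpq⟩ :=
      mem_nhds_iff_exists_Ioo_subset.1 (inter_mem (inter_mem hU (Ioo_mem_nhds ht₀.1 ht₀.2)) hP)
    exact ⟨p, q, ht₀pq, fun τ hτ => (hpq hτ).1.2, hmono.mono fun τ hτ => (hpq hτ).1.1,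
      fun τ hτ => (hpq hτ).2⟩
  rw [hasDerivAt_iff_tendsto_slope]
  refine tendsto_order.2 ⟨fun G hG => ?_, fun G hG => ?_⟩
  · obtain ⟨G', hGG', hG'⟩ := exists_between hG
    obtain ⟨p, q, ht₀pq, hpq, hmono', hgG'⟩ := interval _ (hgt₀.eventually (lt_mem_nhds hG'))
    filter_upwards [nhdsWithin_le_nhds (Ioo_mem_nhds ht₀pq.1 ht₀pq.2), self_mem_nhdsWithin]
      with x hx hxt₀
    refine hGG'.trans_le ?_
    rcases lt_or_gt_of_ne (hxt₀ : x ≠ t₀) with hlt | hgt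
    · rw [slope_comm]; exact hsuper.le_slope hg hw hpq hmono' hgG' hx.1 hlt ht₀pq.2
    · exact hsuper.le_slope hg hw hpq hmono' hgG' ht₀pq.1 hgt hx.2
  · obtain ⟨G', hG', hG'G⟩ := exists_between hG
    obtain ⟨p, q, ht₀pq, hpq, -, hgG'⟩ := interval _ (hgt₀.eventually (gt_mem_nhds hG'))
    filter_upwards [nhdsWithin_le_nhds (Ioo_mem_nhds ht₀pq.1 ht₀pq.2), self_mem_nhdsWithin]
      with x hx hxt₀
    refine lt_of_le_of_lt ?_ hG'G
    rcases lt_or_gt_of_ne (hxt₀ : x ≠ t₀) with hlt | hgt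
    · rw [slope_comm]; exact hsub.slope_le hg hw hpq hgG' hx.1 hlt ht₀pq.2
    · exact hsub.slope_le hg hw hpq hgG' ht₀pq.1 hgt hx.2

lemma hasDerivAt_of_apply_lt_right (hsub : ViscositySubsolution a b g w)
    (hsuper : ViscositySupersolution a b g w) (hg : ContinuousOn g (Icc a b))
    (hgpos : ∀ t ∈ Icc a b, 0 < g t) (hw : ContinuousOn w (Icc a b)) {t₀ t : ℝ}
    (ht₀ : t₀ ∈ Ioo a b) (ht₀t : t₀ < t) (htb : t < b) (hlt : w t₀ < w t) :
    HasDerivAt w (g t₀) t₀ := by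
  have hmin : ∀ τ ∈ Ioo a b, ¬IsLocalMin w τ := fun τ hτ hmin =>
    hsuper.not_isLocalMin hτ (ℓ := 0) (by simpa using hgpos τ (Ioo_subset_Icc_self hτ))
      (by simpa using hmin)
  obtain ⟨m, ht₀m, hmono⟩ := exists_monotoneOn_Ioc_of_lt hw hmin ht₀.1 ht₀t htb hlt
  exact hasDerivAt_of_monotoneOn hsub hsuper hg hw ht₀ (Ioc_mem_nhds ht₀.1 ht₀m) hmono

lemma hasDerivAt_neg_of_apply_lt_left (hsub : ViscositySubsolution a b g w)
    (hsuper : ViscositySupersolution a b g w) (hg : ContinuousOn g (Icc a b))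
    (hgpos : ∀ t ∈ Icc a b, 0 < g t) (hw : ContinuousOn w (Icc a b)) {t₀ t : ℝ}
    (ht₀ : t₀ ∈ Ioo a b) (hat : a < t) (htt₀ : t < t₀) (hlt : w t₀ < w t) :
    HasDerivAt w (-g t₀) t₀ := by
  have hneg : MapsTo (fun t => -t) (Icc (-b) (-a)) (Icc a b) := fun t ht =>
    ⟨by linarith [ht.2], by linarith [ht.1]⟩
  have hreflected := hasDerivAt_of_apply_lt_right hsub.comp_neg hsuper.comp_neg
    (hg.comp continuousOn_neg hneg) (fun t ht => hgpos _ (hneg ht))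
    (hw.comp continuousOn_neg hneg) (t₀ := -t₀) ⟨neg_lt_neg ht₀.2, neg_lt_neg ht₀.1⟩
    (neg_lt_neg htt₀) (neg_lt_neg hat) (by simpa using hlt)
  simpa [Function.comp_def] using
    (show HasDerivAt _ _ (-t₀) from hreflected).comp t₀ (hasDerivAt_neg t₀)

theorem solution_local_max_iff_not_differentiable_general (a b : ℝ) (g w : ℝ → ℝ)
    (hg : ContinuousOn g (Set.Icc a b)) (hgpos : ∀ t ∈ Set.Icc a b, 0 < g t)
    (hw : ContinuousOn w (Set.Icc a b))
    (hsub : ViscositySubsolution a b g w) (hsuper : ViscositySupersolution a b g w) :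
    ∀ t0 ∈ Set.Ioo a b, (IsLocalMax w t0 ↔ ¬ DifferentiableAt ℝ w t0) := by
  intro t0 ht0
  constructor
  · intro hmax hdiff
    have hd := hdiff.hasDerivAt
    rw [hmax.hasDerivAt_eq_zero hd] at hd
    have := hsuper.le_abs_of_hasDerivAt hg hw ht0 hd
    exact (hgpos t0 (Ioo_subset_Icc_self ht0)).not_ge (by simpa using this)
  · intro hnd
    contrapose! hnd
    have hexceeds : ∃ᶠ t in 𝓝 t0, w t0 < w t := by simpa [IsLocalMax, IsMaxFilter] using hnd
    obtain ⟨t, hlt, ht⟩ := (hexceeds.and_eventually (Ioo_mem_nhds ht0.1 ht0.2)).exists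
    rcases lt_or_gt_of_ne (ne_of_apply_ne w hlt.ne') with htt0 | ht0t
    · exact (hasDerivAt_neg_of_apply_lt_left hsub hsuper hg hgpos hw ht0 ht.1 htt0
        hlt).differentiableAt
    · exact (hasDerivAt_of_apply_lt_right hsub hsuper hg hgpos hw ht0 ht0t ht.2
        hlt).differentiableAt

theorem solution_local_max_iff_not_differentiable (a b : ℝ) (hab : a < b) (g w : ℝ → ℝ)
    (hg : ContinuousOn g (Set.Icc a b)) (hgpos : ∀ t ∈ Set.Icc a b, 0 < g t)
    (hw : ContinuousOn w (Set.Icc a b))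
    (hsub : ViscositySubsolution a b g w) (hsuper : ViscositySupersolution a b g w) :
    ∀ t0 ∈ Set.Ioo a b, (IsLocalMax w t0 ↔ ¬ DifferentiableAt ℝ w t0) :=
  solution_local_max_iff_not_differentiable_general a b g w hg hgpos hw hsub hsuper
end

section
/- Let $a<b$ and let $g:[a,b]\to\mathbb{R}$ be continuous with $g(t)>0$ for all $t$. Define $d:[a,b]\to\mathbb{R}$ by $d(t)=\min\left(\int_a^t g(r)\,dr,\ \int_t^b g(r)\,dr\right)$. Then $d$ is continuous, $d(a)=d(b)=0$, and $d$ is a viscosity solution of $|u'|=g$ on $(a,b)$. -/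
open Filter Set intervalIntegral

lemma deriv_nonneg_of_left_le {f : ℝ → ℝ} {f' t0 : ℝ} (hf : HasDerivAt f f' t0)
    (h : ∀ᶠ t in nhdsWithin t0 (Set.Iio t0), f t ≤ f t0) : 0 ≤ f' := by
  have hs : Tendsto (slope f t0) (nhdsWithin t0 (Set.Iio t0)) (nhds f') :=
    (hasDerivAt_iff_tendsto_slope.1 hf).mono_left
      (nhdsWithin_mono _ fun x hx => ne_of_lt hx)
  refine ge_of_tendsto hs ?_
  filter_upwards [h, self_mem_nhdsWithin] with t ht ht'
  rw [slope_def_field]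
  simp only [Set.mem_Iio] at ht'
  exact div_nonneg_iff.mpr (Or.inr ⟨by linarith, by linarith⟩)

lemma deriv_nonpos_of_right_le {f : ℝ → ℝ} {f' t0 : ℝ} (hf : HasDerivAt f f' t0)
    (h : ∀ᶠ t in nhdsWithin t0 (Set.Ioi t0), f t ≤ f t0) : f' ≤ 0 := by
  have hs : Tendsto (slope f t0) (nhdsWithin t0 (Set.Ioi t0)) (nhds f') :=
    (hasDerivAt_iff_tendsto_slope.1 hf).mono_left
      (nhdsWithin_mono _ fun x hx => ne_of_gt hx)
  refine le_of_tendsto hs ?_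
  filter_upwards [h, self_mem_nhdsWithin] with t ht ht'
  rw [slope_def_field]
  simp only [Set.mem_Ioi] at ht'
  exact div_nonpos_iff.mpr (Or.inr ⟨by linarith, by linarith⟩)

lemma deriv_nonpos_of_left_ge {f : ℝ → ℝ} {f' t0 : ℝ} (hf : HasDerivAt f f' t0)
    (h : ∀ᶠ t in nhdsWithin t0 (Set.Iio t0), f t0 ≤ f t) : f' ≤ 0 := by
  have hs : Tendsto (slope f t0) (nhdsWithin t0 (Set.Iio t0)) (nhds f') :=
    (hasDerivAt_iff_tendsto_slope.1 hf).mono_left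
      (nhdsWithin_mono _ fun x hx => ne_of_lt hx)
  refine le_of_tendsto hs ?_
  filter_upwards [h, self_mem_nhdsWithin] with t ht ht'
  rw [slope_def_field]
  simp only [Set.mem_Iio] at ht'
  exact div_nonpos_iff.mpr (Or.inl ⟨by linarith, by linarith⟩)

theorem distance_is_solution (a b : ℝ) (hab : a < b) (g : ℝ → ℝ)
    (hg : ContinuousOn g (Set.Icc a b)) (hgpos : ∀ t ∈ Set.Icc a b, 0 < g t)
    (d : ℝ → ℝ)
    (hd : ∀ t, d t = min (∫ r in a..t, g r) (∫ r in t..b, g r)) :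
    ContinuousOn d (Set.Icc a b) ∧ d a = 0 ∧ d b = 0 ∧
    ViscositySubsolution a b g d ∧ ViscositySupersolution a b g d := by
  set F : ℝ → ℝ := fun t => ∫ r in a..t, g r with hF
  set I : ℝ := ∫ r in a..b, g r with hI
  -- integrability on subintervals
  have hInt : ∀ s ∈ Set.Icc a b, ∀ t ∈ Set.Icc a b, IntervalIntegrable g MeasureTheory.volume s t := by
    intro s hs t ht
    apply ContinuousOn.intervalIntegrable
    apply hg.mono
    rw [← Set.uIcc_of_le hab.le]
    exact Set.uIcc_subset_uIcc (by rwa [Set.uIcc_of_le hab.le]) (by rwa [Set.uIcc_of_le hab.le])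
  have haI : a ∈ Set.Icc a b := ⟨le_refl a, hab.le⟩
  have hbI : b ∈ Set.Icc a b := ⟨hab.le, le_refl b⟩
  -- rewrite ∫ t..b as I - F t
  have hE : ∀ t ∈ Set.Icc a b, (∫ r in t..b, g r) = I - F t := by
    intro t ht
    have := integral_add_adjacent_intervals (hInt a haI t ht) (hInt t ht b hbI)
    simp only [hF, hI] at this ⊢
    linarith
  have hdm : ∀ t ∈ Set.Icc a b, d t = min (F t) (I - F t) := by
    intro t ht; rw [hd, hE t ht]
  -- derivative of F
  have hF' : ∀ t ∈ Set.Ioo a b, HasDerivAt F (g t) t := by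
    intro t ht
    have hmem : Set.Icc a b ∈ nhds t := Icc_mem_nhds ht.1 ht.2
    have hct : ContinuousAt g t := hg.continuousAt hmem
    exact integral_hasDerivAt_right (hInt a haI t (Set.Ioo_subset_Icc_self ht))
      ⟨Set.Icc a b, hmem, hg.aestronglyMeasurable measurableSet_Icc⟩ hct
  -- continuity of F on Icc
  have hFc : ContinuousOn F (Set.Icc a b) := by
    have : MeasureTheory.IntegrableOn g (Set.uIcc a b) := by
      rw [Set.uIcc_of_le hab.le]; exact hg.integrableOn_Icc
    have := continuousOn_primitive_interval this
    rwa [Set.uIcc_of_le hab.le] at this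
  -- strict monotonicity of F
  have hFm : StrictMonoOn F (Set.Icc a b) := by
    apply strictMonoOn_of_deriv_pos (convex_Icc a b) hFc
    intro x hx
    rw [interior_Icc] at hx
    rw [(hF' x hx).deriv]
    exact hgpos x (Set.Ioo_subset_Icc_self hx)
  have hI0 : 0 ≤ I := integral_nonneg hab.le fun u hu => (hgpos u hu).le
  have hFa : F a = 0 := integral_same
  -- continuity of d
  have hdc : ContinuousOn d (Set.Icc a b) := by
    have : ContinuousOn (fun t => min (F t) (I - F t)) (Set.Icc a b) :=
      (continuous_id.min (continuous_const.sub continuous_id)).comp_continuousOn hFc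
    exact this.congr hdm
  refine ⟨hdc, ?_, ?_, ?_, ?_⟩
  · rw [hdm a haI, hFa]; simpa using hI0
  · rw [hdm b hbI]
    have hFb : F b = I := rfl
    rw [hFb]; simpa using hI0
  · -- subsolution
    intro t0 ht0 φ hφ hmax
    have ht0I : t0 ∈ Set.Icc a b := Set.Ioo_subset_Icc_self ht0
    have hF0 := hF' t0 ht0
    have hφ0 : HasDerivAt φ (deriv φ t0) t0 := (hφ t0).hasDerivAt
    have hg0 : 0 < g t0 := hgpos t0 ht0I
    have hIoo : Set.Ioo a b ∈ nhds t0 := Ioo_mem_nhds ht0.1 ht0.2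
    rcases lt_trichotomy (F t0) (I - F t0) with h | h | h
    · -- d = F near t0
      have h2 : ∀ᶠ t in nhds t0, F t < I - F t :=
        hF0.continuousAt.eventually_lt (continuousAt_const.sub hF0.continuousAt) h
      have hev : (fun t => d t - φ t) =ᶠ[nhds t0] (fun t => F t - φ t) := by
        filter_upwards [h2, hIoo] with t h1 h2
        rw [hdm t (Set.Ioo_subset_Icc_self h2), min_eq_left h1.le]
      have hmax' : IsLocalMax (fun t => F t - φ t) t0 := by
        exact hmax.congr hev
      have hz := hmax'.hasDerivAt_eq_zero (hF0.sub hφ0)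
      have : deriv φ t0 = g t0 := by linarith
      rw [this, abs_of_pos hg0]
    · -- crossing point
      have hd0 : d t0 = F t0 := by rw [hdm t0 ht0I]; rw [← h]; exact min_self _
      -- left: d = F
      have hlmem : Set.Ioo a t0 ∈ nhdsWithin t0 (Set.Iio t0) :=
        Ioo_mem_nhdsLT_of_mem ⟨ht0.1, le_refl t0⟩
      have hleft : ∀ᶠ t in nhdsWithin t0 (Set.Iio t0),
          F t - φ t ≤ F t0 - φ t0 := by
        filter_upwards [hlmem, (nhdsWithin_le_nhds hmax : _)] with t ht hm
        have htI : t ∈ Set.Icc a b := ⟨ht.1.le, ht.2.le.trans ht0.2.le⟩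
        have hFlt : F t < F t0 := hFm htI ht0I ht.2
        have : d t = F t := by
          rw [hdm t htI, min_eq_left]; linarith
        simp only [this, hd0] at hm ⊢
        exact hm
      have h1 : 0 ≤ g t0 - deriv φ t0 :=
        deriv_nonneg_of_left_le (hF0.sub hφ0) hleft
      -- right: d = I - F
      have hrmem : Set.Ioo t0 b ∈ nhdsWithin t0 (Set.Ioi t0) :=
        Ioo_mem_nhdsGT_of_mem ⟨le_refl t0, ht0.2⟩
      have hright : ∀ᶠ t in nhdsWithin t0 (Set.Ioi t0),
          (I - F t) - φ t ≤ (I - F t0) - φ t0 := by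
        filter_upwards [hrmem, (nhdsWithin_le_nhds hmax : _)] with t ht hm
        have htI : t ∈ Set.Icc a b := ⟨ht0.1.le.trans ht.1.le, ht.2.le⟩
        have hFgt : F t0 < F t := hFm ht0I htI ht.1
        have : d t = I - F t := by
          rw [hdm t htI, min_eq_right]; linarith
        simp only [this, hd0, ← h] at hm ⊢
        exact hm
      have h2 : (0 : ℝ) - g t0 - deriv φ t0 ≤ 0 :=
        deriv_nonpos_of_right_le ((hasDerivAt_const t0 I).sub hF0 |>.sub hφ0) hright
      rw [abs_le]; constructor <;> linarith
    · -- d = I - F near t0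
      have h2 : ∀ᶠ t in nhds t0, I - F t < F t :=
        (continuousAt_const.sub hF0.continuousAt).eventually_lt hF0.continuousAt h
      have hev : (fun t => d t - φ t) =ᶠ[nhds t0] (fun t => (I - F t) - φ t) := by
        filter_upwards [h2, hIoo] with t h1 h2
        rw [hdm t (Set.Ioo_subset_Icc_self h2), min_eq_right h1.le]
      have hmax' : IsLocalMax (fun t => (I - F t) - φ t) t0 := by
        exact hmax.congr hev
      have hz := hmax'.hasDerivAt_eq_zero (((hasDerivAt_const t0 I).sub hF0).sub hφ0)
      have : deriv φ t0 = -g t0 := by linarith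
      rw [this, abs_neg, abs_of_pos hg0]
  · -- supersolution
    intro t0 ht0 φ hφ hmin
    have ht0I : t0 ∈ Set.Icc a b := Set.Ioo_subset_Icc_self ht0
    have hF0 := hF' t0 ht0
    have hφ0 : HasDerivAt φ (deriv φ t0) t0 := (hφ t0).hasDerivAt
    have hg0 : 0 < g t0 := hgpos t0 ht0I
    have hIoo : Set.Ioo a b ∈ nhds t0 := Ioo_mem_nhds ht0.1 ht0.2
    rcases lt_trichotomy (F t0) (I - F t0) with h | h | h
    · have h2 : ∀ᶠ t in nhds t0, F t < I - F t :=
        hF0.continuousAt.eventually_lt (continuousAt_const.sub hF0.continuousAt) h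
      have hev : (fun t => d t - φ t) =ᶠ[nhds t0] (fun t => F t - φ t) := by
        filter_upwards [h2, hIoo] with t h1 h2
        rw [hdm t (Set.Ioo_subset_Icc_self h2), min_eq_left h1.le]
      have hmin' : IsLocalMin (fun t => F t - φ t) t0 := by
        exact hmin.congr hev
      have hz := hmin'.hasDerivAt_eq_zero (hF0.sub hφ0)
      have : deriv φ t0 = g t0 := by linarith
      rw [this, abs_of_pos hg0]
    · -- crossing point: use left side only
      have hd0 : d t0 = F t0 := by rw [hdm t0 ht0I]; rw [← h]; exact min_self _
      have hlmem : Set.Ioo a t0 ∈ nhdsWithin t0 (Set.Iio t0) :=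
        Ioo_mem_nhdsLT_of_mem ⟨ht0.1, le_refl t0⟩
      have hleft : ∀ᶠ t in nhdsWithin t0 (Set.Iio t0),
          F t0 - φ t0 ≤ F t - φ t := by
        filter_upwards [hlmem, (nhdsWithin_le_nhds hmin : _)] with t ht hm
        have htI : t ∈ Set.Icc a b := ⟨ht.1.le, ht.2.le.trans ht0.2.le⟩
        have hFlt : F t < F t0 := hFm htI ht0I ht.2
        have : d t = F t := by
          rw [hdm t htI, min_eq_left]; linarith
        simp only [this, hd0] at hm ⊢
        exact hm
      have h1 : g t0 - deriv φ t0 ≤ 0 :=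
        deriv_nonpos_of_left_ge (hF0.sub hφ0) hleft
      calc g t0 ≤ deriv φ t0 := by linarith
        _ ≤ |deriv φ t0| := le_abs_self _
    · have h2 : ∀ᶠ t in nhds t0, I - F t < F t :=
        (continuousAt_const.sub hF0.continuousAt).eventually_lt hF0.continuousAt h
      have hev : (fun t => d t - φ t) =ᶠ[nhds t0] (fun t => (I - F t) - φ t) := by
        filter_upwards [h2, hIoo] with t h1 h2
        rw [hdm t (Set.Ioo_subset_Icc_self h2), min_eq_right h1.le]
      have hmin' : IsLocalMin (fun t => (I - F t) - φ t) t0 := by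
        exact hmin.congr hev
      have hz := hmin'.hasDerivAt_eq_zero (((hasDerivAt_const t0 I).sub hF0).sub hφ0)
      have : deriv φ t0 = -g t0 := by linarith
      rw [this, abs_neg, abs_of_pos hg0]
end

section
/- Let $(X,\mathrm{dist})$ be a metric space, $B\subseteq X$ a nonempty subset, $d(x):=\inf_{y\in B}\mathrm{dist}(x,y)$, $K\subseteq X$ a nonempty compact subset, and $u^f(x):=\max_{y\in K}\max\big(d(y)-\mathrm{dist}(x,y),\,0\big)$. Then $u^f(x)=d(x)$ for every $x\in X$ if and only if for every $x\in X$ with $d(x)>0$ there exists $y\in K$ such that $d(y)=\mathrm{dist}(x,y)+d(x)$. -/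
/-- The function `u^f(x) = max_{y ∈ K} [d(y) - dist(x,y)]₊`, where
`d(y) = inf_{z ∈ B} dist(y,z)` is the distance to the boundary set `B`. -/
noncomputable def ufCandidate {X : Type*} [MetricSpace X] (B K : Set X) (x : X) : ℝ :=
  sSup ((fun y => max (Metric.infDist y B - dist x y) 0) '' K)

lemma ufCandidate_bddAbove {X : Type*} [MetricSpace X] (B K : Set X) (x : X) :
    BddAbove ((fun y => max (Metric.infDist y B - dist x y) 0) '' K) := by
  refine ⟨max (Metric.infDist x B) 0, ?_⟩
  rintro r ⟨y, hy, rfl⟩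
  exact max_le_max (by
    have := Metric.infDist_le_infDist_add_dist (x := y) (y := x) (s := B)
    rw [dist_comm] at this; linarith) le_rfl

theorem ufCandidate_eq_d_iff {X : Type*} [MetricSpace X] (B K : Set X)
    (hB : B.Nonempty) (hK : IsCompact K) (hKne : K.Nonempty) :
    (∀ x : X, ufCandidate B K x = Metric.infDist x B) ↔
    (∀ x : X, 0 < Metric.infDist x B →
      ∃ y ∈ K, Metric.infDist y B = dist x y + Metric.infDist x B) := by
  constructor
  · intro h x hx
    have hcont : ContinuousOn (fun y => max (Metric.infDist y B - dist x y) 0) K :=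
      (Continuous.max ((Metric.continuous_infDist_pt B).sub (continuous_const.dist continuous_id)) continuous_const).continuousOn
    obtain ⟨y₀, hy₀K, hmax⟩ := hK.exists_isMaxOn hKne hcont
    have hsup : ufCandidate B K x = max (Metric.infDist y₀ B - dist x y₀) 0 := by
      apply IsGreatest.csSup_eq
      exact ⟨⟨y₀, hy₀K, rfl⟩, by rintro r ⟨y, hy, rfl⟩; exact hmax hy⟩
    rw [h x] at hsup
    refine ⟨y₀, hy₀K, ?_⟩
    rcases max_cases (Metric.infDist y₀ B - dist x y₀) 0 with ⟨h1, _⟩ | ⟨h1, _⟩ <;>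
      rw [h1] at hsup <;> linarith
  · intro h x
    have hne : ((fun y => max (Metric.infDist y B - dist x y) 0) '' K).Nonempty :=
      hKne.image _
    have hub : ufCandidate B K x ≤ Metric.infDist x B := by
      apply csSup_le hne
      rintro r ⟨y, hy, rfl⟩
      have := Metric.infDist_le_infDist_add_dist (x := y) (y := x) (s := B)
      rw [dist_comm] at this
      have hx0 : 0 ≤ Metric.infDist x B := Metric.infDist_nonneg
      exact max_le (by linarith) hx0
    rcases eq_or_lt_of_le (Metric.infDist_nonneg (x := x) (s := B)) with hx | hx
    · obtain ⟨y, hy⟩ := hKne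
      have hge : (0:ℝ) ≤ ufCandidate B K x :=
        le_trans (le_max_right _ _) (le_csSup (ufCandidate_bddAbove B K x) ⟨y, hy, rfl⟩)
      linarith
    · obtain ⟨y, hyK, hy⟩ := h x hx
      have hmem : max (Metric.infDist y B - dist x y) 0 = Metric.infDist x B := by
        rw [hy]; rw [max_eq_left (by linarith)]; ring
      have := le_csSup (ufCandidate_bddAbove B K x) ⟨y, hyK, hmem⟩
      exact le_antisymm hub this
end

section
/- Let $\ell>0$, let $\eta:[0,\ell]\to\mathbb{R}$ be continuous with $\eta(t)>0$ for all $t$, and let $v:[0,\ell]\to\mathbb{R}$ be continuous with $v\ge0$. Let $u,d:[0,\ell]\to\mathbb{R}$ be Lipschitz functions such that $\eta(t)\,|d'(t)|=1$ for almost every $t\in(0,\ell)$, $\eta(t)\,|u'(t)|\le1$ for almost every $t\in(0,\ell)$, and $\eta(t)\,|u'(t)|=1$ for almost every $t$ in the set $\{t\in(0,\ell):v(t)\ne0\}$. If $\int_0^{\ell}v(t)\,\eta(t)\,u'(t)\,\big(u'(t)-d'(t)\big)\,dt\le0$, then $v(t)\,u'(t)=v(t)\,d'(t)$ for almost every $t\in(0,\ell)$.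 -/
open MeasureTheory

theorem energy_identity_transport_direction (ℓ : ℝ) (hℓ : 0 < ℓ)
    (η v u d : ℝ → ℝ)
    (hη : ContinuousOn η (Set.Icc 0 ℓ)) (hηpos : ∀ t ∈ Set.Icc 0 ℓ, 0 < η t)
    (hv : ContinuousOn v (Set.Icc 0 ℓ)) (hvnn : ∀ t ∈ Set.Icc 0 ℓ, 0 ≤ v t)
    (hu : ∃ K : NNReal, LipschitzOnWith K u (Set.Icc 0 ℓ))
    (hd : ∃ K : NNReal, LipschitzOnWith K d (Set.Icc 0 ℓ))
    (hdeik : ∀ᵐ t ∂(volume.restrict (Set.Ioo 0 ℓ)), η t * |deriv d t| = 1)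
    (huineq : ∀ᵐ t ∂(volume.restrict (Set.Ioo 0 ℓ)), η t * |deriv u t| ≤ 1)
    (hueik : ∀ᵐ t ∂(volume.restrict (Set.Ioo 0 ℓ)), v t ≠ 0 → η t * |deriv u t| = 1)
    (hint : ∫ t in Set.Ioo 0 ℓ, v t * η t * deriv u t * (deriv u t - deriv d t) ≤ 0) :
    ∀ᵐ t ∂(volume.restrict (Set.Ioo 0 ℓ)), v t * deriv u t = v t * deriv d t := by
  set f : ℝ → ℝ := fun t => v t * η t * deriv u t * (deriv u t - deriv d t) with hf
  have hsub : Set.Ioo (0:ℝ) ℓ ⊆ Set.Icc 0 ℓ := Set.Ioo_subset_Icc_self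
  have hmem : ∀ᵐ t ∂(volume.restrict (Set.Ioo 0 ℓ)), t ∈ Set.Ioo 0 ℓ :=
    ae_restrict_mem measurableSet_Ioo
  -- min of η
  obtain ⟨a, haI, ham⟩ := (isCompact_Icc (a := (0:ℝ)) (b := ℓ)).exists_isMinOn
    (Set.nonempty_Icc.mpr hℓ.le) hη
  set m := η a with hm
  have hmpos : 0 < m := hηpos a haI
  -- bounds for v, η
  obtain ⟨Cv, hCv⟩ := (isCompact_Icc (a := (0:ℝ)) (b := ℓ)).exists_bound_of_continuousOn hv
  obtain ⟨Cη, hCη⟩ := (isCompact_Icc (a := (0:ℝ)) (b := ℓ)).exists_bound_of_continuousOn hη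
  -- key pointwise a.e. facts
  have key : ∀ᵐ t ∂(volume.restrict (Set.Ioo 0 ℓ)),
      0 ≤ f t ∧ (f t = 0 → v t * deriv u t = v t * deriv d t) ∧
      |f t| ≤ Cv * Cη * (1/m) * (2/m) := by
    filter_upwards [hdeik, huineq, hueik, hmem] with t h1 h2 h3 ht
    have htI : t ∈ Set.Icc 0 ℓ := hsub ht
    have hηt : 0 < η t := hηpos t htI
    have hvt : 0 ≤ v t := hvnn t htI
    have hmt : m ≤ η t := ham htI
    have hub : |deriv u t| ≤ 1 / m := by
      rw [le_div_iff₀ hmpos]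
      calc |deriv u t| * m ≤ |deriv u t| * η t := by
            exact mul_le_mul_of_nonneg_left hmt (abs_nonneg _)
        _ = η t * |deriv u t| := mul_comm _ _
        _ ≤ 1 := h2
    have hdb : |deriv d t| ≤ 1 / m := by
      rw [le_div_iff₀ hmpos]
      calc |deriv d t| * m ≤ |deriv d t| * η t := by
            exact mul_le_mul_of_nonneg_left hmt (abs_nonneg _)
        _ = η t * |deriv d t| := mul_comm _ _
        _ = 1 := h1
    refine ⟨?_, ?_, ?_⟩
    · rcases eq_or_ne (v t) 0 with hv0 | hv0
      · simp [hf, hv0]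
      · have : |deriv u t| = |deriv d t| := by
          have := h3 hv0
          have hne := hηt.ne'
          field_simp at this h1
          nlinarith
        have hsq : (deriv u t)^2 = (deriv d t)^2 := by
          rw [← sq_abs, ← sq_abs (deriv d t), this]
        have : f t = v t * η t * ((deriv u t - deriv d t)^2 / 2) := by
          simp only [hf]; linear_combination (v t * η t / 2) * hsq
        rw [this]
        positivity
    · intro hf0
      rcases eq_or_ne (v t) 0 with hv0 | hv0
      · simp [hv0]
      · have : |deriv u t| = |deriv d t| := by
          have := h3 hv0
          have hne := hηt.ne'
          field_simp at this h1
          nlinarith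
        have hsq : (deriv u t)^2 = (deriv d t)^2 := by
          rw [← sq_abs, ← sq_abs (deriv d t), this]
        have hfe : f t = v t * η t * ((deriv u t - deriv d t)^2 / 2) := by
          simp only [hf]; linear_combination (v t * η t / 2) * hsq
        rw [hfe] at hf0
        have hvpos : 0 < v t := lt_of_le_of_ne hvt (Ne.symm hv0)
        have : (deriv u t - deriv d t)^2 / 2 = 0 := by
          have := mul_pos hvpos hηt
          exact (mul_eq_zero.mp hf0).resolve_left this.ne'
        have : deriv u t = deriv d t := by nlinarith [sq_nonneg (deriv u t - deriv d t)]
        rw [this]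
    · have hud : |deriv u t - deriv d t| ≤ 2 / m := by
        calc |deriv u t - deriv d t| ≤ |deriv u t| + |deriv d t| := abs_sub _ _
          _ ≤ 1/m + 1/m := add_le_add hub hdb
          _ = 2/m := by ring
      have hvb : |v t| ≤ Cv := hCv t htI
      have hηb : |η t| ≤ Cη := hCη t htI
      have hCv0 : (0:ℝ) ≤ Cv := (abs_nonneg _).trans hvb
      have hCη0 : (0:ℝ) ≤ Cη := (abs_nonneg _).trans hηb
      calc |f t| = |v t| * |η t| * |deriv u t| * |deriv u t - deriv d t| := by
            simp [hf, abs_mul]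
        _ ≤ Cv * Cη * (1/m) * (2/m) := by
            gcongr <;>
              first | exact abs_nonneg _ | exact hvb | exact hηb | exact hub | exact hud | positivity
  have hfmeas : AEStronglyMeasurable f (volume.restrict (Set.Ioo 0 ℓ)) := by
    have hle : volume.restrict (Set.Ioo (0:ℝ) ℓ) ≤ volume.restrict (Set.Icc 0 ℓ) :=
      Measure.restrict_mono hsub le_rfl
    have hvm : AEStronglyMeasurable v (volume.restrict (Set.Ioo 0 ℓ)) :=
      (hv.aestronglyMeasurable measurableSet_Icc).mono_measure hle
    have hηm : AEStronglyMeasurable η (volume.restrict (Set.Ioo 0 ℓ)) :=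
      (hη.aestronglyMeasurable measurableSet_Icc).mono_measure hle
    exact ((hvm.mul hηm).mul (measurable_deriv u).aestronglyMeasurable).mul
      ((measurable_deriv u).aestronglyMeasurable.sub (measurable_deriv d).aestronglyMeasurable)
  have hfint : Integrable f (volume.restrict (Set.Ioo 0 ℓ)) := by
    refine Integrable.mono' (integrable_const (Cv * Cη * (1/m) * (2/m))) hfmeas ?_
    filter_upwards [key] with t ht using ht.2.2
  have hnn : 0 ≤ᵐ[volume.restrict (Set.Ioo 0 ℓ)] f := by
    filter_upwards [key] with t ht using ht.1
  have hiz : ∫ t in Set.Ioo 0 ℓ, f t = 0 :=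
    le_antisymm hint (integral_nonneg_of_ae hnn)
  have hfz : f =ᵐ[volume.restrict (Set.Ioo 0 ℓ)] 0 :=
    (integral_eq_zero_iff_of_nonneg_ae hnn hfint).mp hiz
  filter_upwards [key, hfz] with t ht htz
  exact ht.2.1 htz
end

section
/- Let $\ell>0$, let $\eta:[0,\ell]\to\mathbb{R}$ be continuous with $\eta>0$, let $f:[0,\ell]\to\mathbb{R}$ be bounded, measurable and nonnegative, and let $\bar t\in(0,\ell)$ satisfy $\int_0^{\bar t}\frac{dr}{\eta(r)}=\int_{\bar t}^{\ell}\frac{dr}{\eta(r)}$. Define $s:[0,\ell]\to\mathbb{R}$ by $s(t)=1$ for $t<\bar t$ and $s(t)=-1$ for $t>\bar t$ (so that $s=\eta\,d'$ a.e., where $d(t)=\min(\int_0^t 1/\eta,\int_t^\ell 1/\eta)$), and define $v:[0,\ell]\to\mathbb{R}$ by $v(t)=\int_t^{\bar t}f(r)\,dr$ for $t\le\bar t$ and $v(t)=\int_{\bar t}^{t}f(r)\,dr$ for $t\ge\bar t$. Then $v$ is Lipschitz, $v\ge0$, $v(\bar t)=0$, and for every Lipschitz function $\psi:[0,\ell]\to\mathbb{R}$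 with $\psi(0)=\psi(\ell)=0$ one has $\int_0^{\ell}v(t)\,s(t)\,\psi'(t)\,dt=\int_0^{\ell}f(t)\,\psi(t)\,dt$. -/
/-!
Away from `tbar`, `v * s` is the negative of the primitive `P t = ∫_tbar^t f`, so the identity is
integration by parts `∫ P ψ' = P ψ |₀^ℓ - ∫ f ψ` for the absolutely continuous functions `P` and
`ψ`, with `P' = f` a.e. by Lebesgue differentiation. Since `f ≥ 0`, `v = |P|`, which gives
`v ≥ 0`, and `v` is Lipschitz because `P` is the primitive of a bounded function.
-/

open MeasureTheory Set intervalIntegral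

theorem lipschitzOnWith_primitive {E : Type*} [NormedAddCommGroup E] [NormedSpace ℝ E]
    {f : ℝ → E} {a b c : ℝ} {C : NNReal} (hf : IntervalIntegrable f volume a b)
    (hc : c ∈ uIcc a b) (hC : ∀ x ∈ uIcc a b, ‖f x‖ ≤ C) :
    LipschitzOnWith C (fun x => ∫ t in c..x, f t) (uIcc a b) := by
  refine LipschitzOnWith.of_dist_le_mul fun x hx y hy => ?_
  have hsub : ∀ {u w}, u ∈ uIcc a b → w ∈ uIcc a b → IntervalIntegrable f volume u w :=
    fun hu hw => hf.mono_set (uIcc_subset_uIcc hu hw)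
  rw [dist_eq_norm, integral_interval_sub_left (hsub hc hx) (hsub hc hy), Real.dist_eq,
    ← Real.norm_eq_abs]
  exact norm_integral_le_of_norm_le_const fun t ht =>
    hC t (uIcc_subset_uIcc hy hx (uIoc_subset_uIcc ht))

theorem integral_primitive_mul_deriv {f ψ : ℝ → ℝ} {a b c : ℝ}
    (hf : IntervalIntegrable f volume a b) (hc : c ∈ uIcc a b)
    (hψ : AbsolutelyContinuousOnInterval ψ a b) (ha : ψ a = 0) (hb : ψ b = 0) :
    ∫ x in a..b, (∫ t in c..x, f t) * deriv ψ x = -∫ x in a..b, f x * ψ x := by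
  have hderiv : ∀ᵐ x, x ∈ uIcc a b → deriv (fun x => ∫ t in c..x, f t) x = f x := by
    filter_upwards [hf.ae_hasDerivAt_integral] with x hx hxab
    exact (hx hxab c hc).deriv
  rw [(hf.absolutelyContinuousOnInterval_intervalIntegral hc).integral_mul_deriv_eq_deriv_mul hψ,
    ha, hb, mul_zero, mul_zero, sub_zero, zero_sub]
  congr 1
  refine integral_congr_ae ?_
  filter_upwards [hderiv] with x hx hxab
  rw [hx (uIoc_subset_uIcc hxab)]

section RollingLayer

variable {f v : ℝ → ℝ} {c : ℝ}

theorem mul_sign_eq_neg_primitive {s : ℝ → ℝ}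
    (hv : ∀ t, (t ≤ c → v t = ∫ r in t..c, f r) ∧ (c ≤ t → v t = ∫ r in c..t, f r))
    (hs : ∀ t, (t < c → s t = 1) ∧ (c < t → s t = -1))
    {t : ℝ} (ht : t ≠ c) : v t * s t = -∫ r in c..t, f r := by
  rcases ht.lt_or_gt with h | h
  · rw [(hv t).1 h.le, (hs t).1 h, integral_symm, mul_one]
  · rw [(hv t).2 h.le, (hs t).2 h, mul_neg_one]

theorem eq_abs_primitive
    (hv : ∀ t, (t ≤ c → v t = ∫ r in t..c, f r) ∧ (c ≤ t → v t = ∫ r in c..t, f r))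
    {t : ℝ} (hf : ∀ r ∈ uIcc t c, 0 ≤ f r) :
    v t = |∫ r in c..t, f r| := by
  rcases le_total t c with h | h
  · rw [(hv t).1 h, ← abs_of_nonneg (integral_nonneg h fun r hr => hf r (Icc_subset_uIcc hr)),
      integral_symm, abs_neg]
  · rw [(hv t).2 h, abs_of_nonneg (integral_nonneg h fun r hr => hf r (Icc_subset_uIcc' hr))]

end RollingLayer

theorem sandpile_existence_single_edge_general (ℓ : ℝ)
    (f : ℝ → ℝ)
    (hfmeas : Measurable f) (hfnn : ∀ t ∈ Set.Icc 0 ℓ, 0 ≤ f t)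
    (hfbd : ∃ C : ℝ, ∀ t ∈ Set.Icc 0 ℓ, f t ≤ C)
    (tbar : ℝ) (htbar : tbar ∈ Set.Ioo 0 ℓ)
    (s : ℝ → ℝ)
    (hs : ∀ t : ℝ, (t < tbar → s t = 1) ∧ (tbar < t → s t = -1))
    (v : ℝ → ℝ)
    (hvdef : ∀ t : ℝ, (t ≤ tbar → v t = ∫ r in t..tbar, f r) ∧
      (tbar ≤ t → v t = ∫ r in tbar..t, f r)) :
    (∃ K : NNReal, LipschitzOnWith K v (Set.Icc 0 ℓ)) ∧
    (∀ t ∈ Set.Icc 0 ℓ, 0 ≤ v t) ∧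
    v tbar = 0 ∧
    (∀ ψ : ℝ → ℝ, (∃ K : NNReal, LipschitzOnWith K ψ (Set.Icc 0 ℓ)) →
      ψ 0 = 0 → ψ ℓ = 0 →
      ∫ t in Set.Ioo 0 ℓ, v t * s t * deriv ψ t = ∫ t in Set.Ioo 0 ℓ, f t * ψ t) := by
  obtain ⟨C, hC⟩ := hfbd
  have hℓ : 0 ≤ ℓ := (htbar.1.trans htbar.2).le
  have htbar' : tbar ∈ uIcc 0 ℓ := Ioo_subset_Icc_self.trans Icc_subset_uIcc htbar
  rw [← uIcc_of_le hℓ] at hfnn hC ⊢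
  have hfC : ∀ t ∈ uIcc 0 ℓ, ‖f t‖ ≤ C.toNNReal := fun t ht =>
    (Real.norm_of_nonneg (hfnn t ht)).trans_le ((hC t ht).trans (Real.le_coe_toNNReal C))
  have hfint : IntervalIntegrable f volume 0 ℓ := intervalIntegrable_const.mono_fun'
    hfmeas.aestronglyMeasurable
    (ae_restrict_of_forall_mem measurableSet_uIoc fun t ht => hfC t (uIoc_subset_uIcc ht))
  set P : ℝ → ℝ := fun t => ∫ r in tbar..t, f r
  have hvP : ∀ t ∈ uIcc 0 ℓ, v t = |P t| := fun t ht =>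
    eq_abs_primitive hvdef fun r hr => hfnn r (uIcc_subset_uIcc ht htbar' hr)
  refine ⟨⟨1 * C.toNNReal, fun x hx y hy => ?_⟩, fun t ht => hvP t ht ▸ abs_nonneg _,
    by rw [(hvdef tbar).1 le_rfl, integral_same], fun ψ ⟨K, hψ⟩ hψ0 hψℓ => ?_⟩
  · rw [hvP x hx, hvP y hy]
    exact lipschitzWith_one_norm.comp_lipschitzOnWith
      (lipschitzOnWith_primitive hfint htbar' hfC) hx hy
  have hvs : ∀ᵐ t ∂volume.restrict (Ioo 0 ℓ), v t * s t * deriv ψ t = -(P t * deriv ψ t) :=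
    ae_restrict_of_ae <| (Measure.ae_ne volume tbar).mono fun t ht => by
      rw [mul_sign_eq_neg_primitive hvdef hs ht, neg_mul]
  rw [integral_congr_ae hvs, MeasureTheory.integral_neg, ← integral_Ioc_eq_integral_Ioo,
    ← integral_of_le hℓ, integral_primitive_mul_deriv hfint htbar'
      hψ.absolutelyContinuousOnInterval hψ0 hψℓ, neg_neg, integral_of_le hℓ,
    integral_Ioc_eq_integral_Ioo]

theorem sandpile_existence_single_edge (ℓ : ℝ) (hℓ : 0 < ℓ)
    (η f : ℝ → ℝ)
    (hη : ContinuousOn η (Set.Icc 0 ℓ)) (hηpos : ∀ t ∈ Set.Icc 0 ℓ, 0 < η t)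
    (hfmeas : Measurable f) (hfnn : ∀ t ∈ Set.Icc 0 ℓ, 0 ≤ f t)
    (hfbd : ∃ C : ℝ, ∀ t ∈ Set.Icc 0 ℓ, f t ≤ C)
    (tbar : ℝ) (htbar : tbar ∈ Set.Ioo 0 ℓ)
    (hbal : (∫ r in (0:ℝ)..tbar, 1 / η r) = ∫ r in tbar..ℓ, 1 / η r)
    (s : ℝ → ℝ)
    (hs : ∀ t : ℝ, (t < tbar → s t = 1) ∧ (tbar < t → s t = -1))
    (v : ℝ → ℝ)
    (hvdef : ∀ t : ℝ, (t ≤ tbar → v t = ∫ r in t..tbar, f r) ∧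
      (tbar ≤ t → v t = ∫ r in tbar..t, f r)) :
    (∃ K : NNReal, LipschitzOnWith K v (Set.Icc 0 ℓ)) ∧
    (∀ t ∈ Set.Icc 0 ℓ, 0 ≤ v t) ∧
    v tbar = 0 ∧
    (∀ ψ : ℝ → ℝ, (∃ K : NNReal, LipschitzOnWith K ψ (Set.Icc 0 ℓ)) →
      ψ 0 = 0 → ψ ℓ = 0 →
      ∫ t in Set.Ioo 0 ℓ, v t * s t * deriv ψ t = ∫ t in Set.Ioo 0 ℓ, f t * ψ t) :=
  sandpile_existence_single_edge_general ℓ f hfmeas hfnn hfbd tbar htbar s hs v hvdef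
end

section
/- Let $\ell>0$, let $\eta:[0,\ell]\to\mathbb{R}$ be continuous with $\eta>0$, let $f:[0,\ell]\to\mathbb{R}$ be bounded and measurable, and let $\bar t\in(0,\ell)$ satisfy $\int_0^{\bar t}\frac{dr}{\eta(r)}=\int_{\bar t}^{\ell}\frac{dr}{\eta(r)}$. Define $s:[0,\ell]\to\mathbb{R}$ by $s(t)=1$ for $t<\bar t$ and $s(t)=-1$ for $t>\bar t$. Suppose $v:[0,\ell]\to\mathbb{R}$ is continuous and satisfies $\int_0^{\ell}v(t)\,s(t)\,\psi'(t)\,dt=\int_0^{\ell}f(t)\,\psi(t)\,dt$ for every Lipschitz function $\psi:[0,\ell]\to\mathbb{R}$ with $\psi(0)=\psi(\ell)=0$. Then $v(\bar t)=0$, $v(t)=\int_t^{\bar t}f(r)\,dr$ for all $t\in[0,\bar t]$, and $v(t)=\int_{\bar t}^{t}f(r)\,dr$ for all $t\in[\bar t,\ell]$. -/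
/-!
Testing the weak formulation against the Dirichlet Green functions `G(·, a) = min(·, a) - a·/ℓ`,
whose derivative is `𝟙_{(-∞, a)} - a/ℓ`, gives `∫₀ᵃ v s - (a/ℓ) ∫₀^ℓ v s = ∫₀^ℓ f G(·, a)` for
every `a ∈ [0, ℓ]`. Differentiating in `a` (under the integral sign on the right) shows
`v s = ∫ₜ^ℓ f + c` at every continuity point `t` of `v s`, i.e. away from `t̄`. Since `s` jumps
from `1` to `-1` at `t̄` while `v` is continuous, the one-sided limits at `t̄` force `v t̄ = 0`,
which fixes `c = -∫_{t̄}^ℓ f`.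
-/

open MeasureTheory Set Filter Topology

noncomputable def dirichletGreen (ℓ a x : ℝ) : ℝ := min x a - a / ℓ * x

section DirichletGreen

variable {ℓ a : ℝ}

theorem lipschitzWith_dirichletGreen (ℓ a : ℝ) :
    LipschitzWith (1 + ‖a / ℓ‖₊) (dirichletGreen ℓ a) :=
  (LipschitzWith.id.min_const a).sub (lipschitzWith_smul (a / ℓ))

theorem dirichletGreen_zero (ha : 0 ≤ a) : dirichletGreen ℓ a 0 = 0 := by
  simp [dirichletGreen, ha]

theorem dirichletGreen_self (hℓ : ℓ ≠ 0) (ha : a ≤ ℓ) : dirichletGreen ℓ a ℓ = 0 := by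
  simp [dirichletGreen, min_eq_right ha, div_mul_cancel₀ _ hℓ]

theorem deriv_dirichletGreen {x : ℝ} (hx : x ≠ a) :
    deriv (dirichletGreen ℓ a) x = (Iio a).indicator 1 x - a / ℓ := by
  rcases hx.lt_or_gt with h | h
  · have heq : dirichletGreen ℓ a =ᶠ[𝓝 x] fun y => y - a / ℓ * y := by
      filter_upwards [Iio_mem_nhds h] with y hy
      simp [dirichletGreen, min_eq_left (mem_Iio.1 hy).le]
    have hd : HasDerivAt (fun y => y - a / ℓ * y) (1 - a / ℓ * 1) x :=
      (hasDerivAt_id x).sub ((hasDerivAt_id x).const_mul (a / ℓ))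
    rw [heq.deriv_eq, hd.deriv]
    simp [h]
  · have heq : dirichletGreen ℓ a =ᶠ[𝓝 x] fun y => a - a / ℓ * y := by
      filter_upwards [Ioi_mem_nhds h] with y hy
      simp [dirichletGreen, min_eq_right (mem_Ioi.1 hy).le]
    have hd : HasDerivAt (fun y => a - a / ℓ * y) (0 - a / ℓ * 1) x :=
      (hasDerivAt_const x a).sub ((hasDerivAt_id x).const_mul (a / ℓ))
    rw [heq.deriv_eq, hd.deriv]
    simp [h.not_gt]

theorem integral_mul_deriv_dirichletGreen {μ : Measure ℝ} [NullSingletonClass μ] {g : ℝ → ℝ}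
    (hg : Integrable g μ) :
    ∫ x, g x * deriv (dirichletGreen ℓ a) x ∂μ = ∫ x in Iio a, g x ∂μ - a / ℓ * ∫ x, g x ∂μ := by
  calc ∫ x, g x * deriv (dirichletGreen ℓ a) x ∂μ
      = ∫ x, (Iio a).indicator g x - a / ℓ * g x ∂μ := by
        refine integral_congr_ae ?_
        filter_upwards [Measure.ae_ne μ a] with x hx
        rw [deriv_dirichletGreen hx]
        by_cases h : x < a <;> simp [h] <;> ring
    _ = _ := by
      rw [integral_sub (hg.indicator measurableSet_Iio) (hg.const_mul _), integral_const_mul,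
        integral_indicator measurableSet_Iio]

theorem integral_mul_dirichletGreen {μ : Measure ℝ} {f : ℝ → ℝ}
    (hmin : Integrable (fun x => f x * min x a) μ) (hid : Integrable (fun x => f x * x) μ) :
    ∫ x, f x * dirichletGreen ℓ a x ∂μ = ∫ x, f x * min x a ∂μ - a / ℓ * ∫ x, f x * x ∂μ := by
  simp only [dirichletGreen, mul_sub, mul_left_comm (f _)]
  rw [integral_sub hmin (hid.const_mul _), integral_const_mul]

end DirichletGreen

theorem hasDerivAt_const_min {x u : ℝ} (hx : x ≠ u) :
    HasDerivAt (fun u => min x u) ((Ioi u).indicator 1 x) u := by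
  rcases hx.lt_or_gt with h | h
  · rw [indicator_of_notMem (s := Ioi u) (not_lt.2 h.le)]
    refine (hasDerivAt_const u x).congr_of_eventuallyEq ?_
    filter_upwards [Ioi_mem_nhds h] with y hy using min_eq_left (mem_Ioi.1 hy).le
  · rw [indicator_of_mem (s := Ioi u) h, Pi.one_apply]
    refine (hasDerivAt_id u).congr_of_eventuallyEq ?_
    filter_upwards [Iio_mem_nhds h] with y hy using min_eq_right (mem_Iio.1 hy).le

theorem hasDerivAt_integral_mul_min {μ : Measure ℝ} [NullSingletonClass μ] {f : ℝ → ℝ} {u : ℝ}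
    (hf : Integrable f μ) (hfu : Integrable (fun x => f x * min x u) μ) :
    HasDerivAt (fun u => ∫ x, f x * min x u ∂μ) (∫ x in Ioi u, f x ∂μ) u := by
  rw [← integral_indicator measurableSet_Ioi]
  refine (hasDerivAt_integral_of_dominated_loc_of_lip (F := fun u x => f x * min x u) (x₀ := u)
    (bound := fun x => ‖f x‖) univ_mem
    (Eventually.of_forall fun u =>
      hf.aestronglyMeasurable.mul (continuous_id.min continuous_const).aestronglyMeasurable)
    hfu (hf.indicator measurableSet_Ioi).aestronglyMeasurable
    (ae_of_all _ fun x => ?_) hf.norm ?_).2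
  · have hlip : LipschitzWith (‖f x‖₊ * 1) fun u => f x * min x u :=
      (lipschitzWith_smul (f x)).comp (LipschitzWith.id.const_min x)
    have hK : Real.nnabs ‖f x‖ = ‖f x‖₊ * 1 := by ext; simp
    simpa only [hK] using hlip.lipschitzOnWith
  · filter_upwards [Measure.ae_ne μ u] with x hx
    simpa [indicator_apply] using (hasDerivAt_const_min hx).const_mul (f x)

theorem setIntegral_Iio_restrict_Ioo {g : ℝ → ℝ} {ℓ a : ℝ} (ha : 0 ≤ a) (haℓ : a ≤ ℓ) :
    ∫ x in Iio a, g x ∂(volume.restrict (Ioo 0 ℓ)) = ∫ x in 0..a, g x := by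
  rw [Measure.restrict_restrict measurableSet_Iio, Iio_inter_Ioo, min_eq_left haℓ,
    intervalIntegral.integral_of_le ha, integral_Ioc_eq_integral_Ioo]

theorem setIntegral_Ioi_restrict_Ioo {g : ℝ → ℝ} {ℓ a : ℝ} (ha : 0 ≤ a) (haℓ : a ≤ ℓ) :
    ∫ x in Ioi a, g x ∂(volume.restrict (Ioo 0 ℓ)) = ∫ x in a..ℓ, g x := by
  rw [Measure.restrict_restrict measurableSet_Ioi, Ioi_inter_Ioo, max_eq_left ha,
    intervalIntegral.integral_of_le haℓ, integral_Ioc_eq_integral_Ioo]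

theorem exists_eq_integral_add_const_of_forall_dirichletGreen {ℓ : ℝ} {w f : ℝ → ℝ}
    (hw : IntegrableOn w (Ioo 0 ℓ)) (hf : IntegrableOn f (Icc 0 ℓ))
    (h : ∀ a ∈ Icc 0 ℓ, ∫ x in Ioo 0 ℓ, w x * deriv (dirichletGreen ℓ a) x =
      ∫ x in Ioo 0 ℓ, f x * dirichletGreen ℓ a x) :
    ∃ c, ∀ t ∈ Ioo 0 ℓ, ContinuousAt w t → w t = (∫ r in t..ℓ, f r) + c := by
  set W := ∫ x in Ioo 0 ℓ, w x
  set A := ∫ x in Ioo 0 ℓ, f x * x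
  refine ⟨(W - A) / ℓ, fun t ht hwt => ?_⟩
  have hfmin (a : ℝ) : IntegrableOn (fun x => f x * min x a) (Ioo 0 ℓ) :=
    (hf.mul_continuousOn (continuous_id.min continuous_const).continuousOn isCompact_Icc).mono_set
      Ioo_subset_Icc_self
  have hfid : IntegrableOn (fun x => f x * x) (Ioo 0 ℓ) :=
    (hf.mul_continuousOn continuousOn_id isCompact_Icc).mono_set Ioo_subset_Icc_self
  have hidentity : ∀ a ∈ Icc 0 ℓ,
      (∫ x in 0..a, w x) - a / ℓ * W = (∫ x in Ioo 0 ℓ, f x * min x a) - a / ℓ * A := by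
    intro a ha
    have := h a ha
    rwa [integral_mul_deriv_dirichletGreen hw, integral_mul_dirichletGreen (hfmin a) hfid,
      setIntegral_Iio_restrict_Ioo ha.1 ha.2] at this
  have hdiff_w : HasDerivAt (fun a => (∫ x in 0..a, w x) - a / ℓ * W) (w t - 1 / ℓ * W) t := by
    have hwt_int : IntervalIntegrable w volume 0 t :=
      (intervalIntegrable_iff_integrableOn_Ioc_of_le ht.1.le).2
        (hw.mono_set (Ioc_subset_Ioo_right ht.2))
    exact (intervalIntegral.integral_hasDerivAt_right hwt_int
      ⟨Ioo 0 ℓ, Ioo_mem_nhds ht.1 ht.2, hw.aestronglyMeasurable⟩ hwt).sub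
      (((hasDerivAt_id t).div_const ℓ).mul_const W)
  have hdiff_f : HasDerivAt (fun a => (∫ x in Ioo 0 ℓ, f x * min x a) - a / ℓ * A)
      ((∫ r in t..ℓ, f r) - 1 / ℓ * A) t := by
    have hΦ := hasDerivAt_integral_mul_min (hf.mono_set Ioo_subset_Icc_self) (hfmin t)
    rw [setIntegral_Ioi_restrict_Ioo ht.1.le ht.2.le] at hΦ
    exact hΦ.sub (((hasDerivAt_id t).div_const ℓ).mul_const A)
  have hderiv := hdiff_w.unique
    (hdiff_f.congr_of_eventuallyEq (eventually_of_mem (Icc_mem_nhds ht.1 ht.2) hidentity))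
  rw [sub_div, div_eq_inv_mul W, div_eq_inv_mul A]
  simp only [one_div] at hderiv
  linarith

section Step

variable {s : ℝ → ℝ} {b : ℝ}

theorem continuousAt_of_step (hs : ∀ t : ℝ, (t < b → s t = 1) ∧ (b < t → s t = -1)) {t : ℝ}
    (ht : t ≠ b) : ContinuousAt s t := by
  rcases ht.lt_or_gt with h | h
  · exact continuousAt_const.congr
      (eventually_of_mem (Iio_mem_nhds h) fun x hx => ((hs x).1 hx).symm)
  · exact continuousAt_const.congr
      (eventually_of_mem (Ioi_mem_nhds h) fun x hx => ((hs x).2 hx).symm)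

theorem IntegrableOn.mul_step {v : ℝ → ℝ} {K : Set ℝ} (hv : IntegrableOn v K)
    (hs : ∀ t : ℝ, (t < b → s t = 1) ∧ (b < t → s t = -1)) :
    IntegrableOn (fun x => v x * s x) K := by
  have hae : s =ᵐ[volume] fun x => if x < b then 1 else -1 := by
    filter_upwards [Measure.ae_ne volume b] with x hx
    rcases hx.lt_or_gt with h | h
    · simp [(hs x).1 h, h]
    · simp [(hs x).2 h, h.not_gt]
  refine hv.mul_bdd (c := 1) ((Measurable.ite measurableSet_Iio measurable_const
    measurable_const).aestronglyMeasurable.congr (ae_restrict_of_ae hae.symm))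
    (ae_restrict_of_ae ?_)
  filter_upwards [hae] with x hx
  rw [hx]
  split_ifs <;> simp

theorem eq_zero_and_eqOn_of_mul_step_eq {v F : ℝ → ℝ} {p q : ℝ} (hb : b ∈ Ioo p q)
    (hv : ContinuousOn v (Icc p q)) (hF : ContinuousOn F (Icc p q))
    (hs : ∀ t : ℝ, (t < b → s t = 1) ∧ (b < t → s t = -1))
    (h : ∀ t ∈ Ioo p q, t ≠ b → v t * s t = F t) :
    v b = 0 ∧ EqOn v (fun t => F t - F b) (Icc p b) ∧ EqOn v (fun t => F b - F t) (Icc b q) := by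
  obtain ⟨hpb, hbq⟩ := hb
  have hleft : EqOn v F (Icc p b) :=
    EqOn.of_subset_closure
      (fun t ht => by simpa [(hs t).1 ht.2] using h t ⟨ht.1, ht.2.trans hbq⟩ ht.2.ne)
      (hv.mono (Icc_subset_Icc_right hbq.le)) (hF.mono (Icc_subset_Icc_right hbq.le))
      Ioo_subset_Icc_self (closure_Ioo hpb.ne).ge
  have hright : EqOn v (fun t => -F t) (Icc b q) :=
    EqOn.of_subset_closure
      (fun t ht => neg_eq_iff_eq_neg.1 <| by
        simpa [(hs t).2 ht.1] using h t ⟨hpb.trans ht.1, ht.2⟩ ht.1.ne')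
      (hv.mono (Icc_subset_Icc_left hpb.le)) (hF.mono (Icc_subset_Icc_left hpb.le)).neg
      Ioo_subset_Icc_self (closure_Ioo hbq.ne).ge
  have hFb : F b = 0 := by linarith [hleft ⟨hpb.le, le_rfl⟩, hright ⟨le_rfl, hbq.le⟩]
  refine ⟨(hleft ⟨hpb.le, le_rfl⟩).trans hFb, fun t ht => ?_, fun t ht => ?_⟩
  · simp [hleft ht, hFb]
  · simp [hright ht, hFb]

end Step

theorem sandpile_uniqueness_single_edge_general (ℓ : ℝ) (hℓ : 0 < ℓ)
    (f : ℝ → ℝ)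
    (hfmeas : Measurable f)
    (hfbd : ∃ C : ℝ, ∀ t ∈ Set.Icc 0 ℓ, |f t| ≤ C)
    (tbar : ℝ) (htbar : tbar ∈ Set.Ioo 0 ℓ)
    (s : ℝ → ℝ)
    (hs : ∀ t : ℝ, (t < tbar → s t = 1) ∧ (tbar < t → s t = -1))
    (v : ℝ → ℝ) (hv : ContinuousOn v (Set.Icc 0 ℓ))
    (hweak : ∀ ψ : ℝ → ℝ, (∃ K : NNReal, LipschitzOnWith K ψ (Set.Icc 0 ℓ)) →
      ψ 0 = 0 → ψ ℓ = 0 →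
      ∫ t in Set.Ioo 0 ℓ, v t * s t * deriv ψ t = ∫ t in Set.Ioo 0 ℓ, f t * ψ t) :
    v tbar = 0 ∧
    (∀ t ∈ Set.Icc 0 tbar, v t = ∫ r in t..tbar, f r) ∧
    (∀ t ∈ Set.Icc tbar ℓ, v t = ∫ r in tbar..t, f r) := by
  obtain ⟨C, hC⟩ := hfbd
  have hf : IntegrableOn f (Icc 0 ℓ) := Measure.integrableOn_of_bounded measure_Icc_lt_top.ne
    hfmeas.aestronglyMeasurable ((ae_restrict_iff' measurableSet_Icc).2 (ae_of_all _ hC))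
  obtain ⟨c, hc⟩ := exists_eq_integral_add_const_of_forall_dirichletGreen
    (IntegrableOn.mul_step (hv.integrableOn_Icc.mono_set Ioo_subset_Icc_self) hs) hf fun a ha =>
      hweak _ ⟨_, (lipschitzWith_dirichletGreen ℓ a).lipschitzOnWith⟩ (dirichletGreen_zero ha.1)
        (dirichletGreen_self hℓ.ne' ha.2)
  have hF : ContinuousOn (fun t => (∫ r in t..ℓ, f r) + c) (Icc 0 ℓ) := by
    have := intervalIntegral.continuousOn_primitive_interval_left (by rwa [uIcc_of_le hℓ.le])
    exact (uIcc_of_le hℓ.le ▸ this).add continuousOn_const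
  obtain ⟨hv0, hleft, hright⟩ := eq_zero_and_eqOn_of_mul_step_eq htbar hv hF hs fun t ht htb =>
    hc t ht ((hv.continuousAt (Icc_mem_nhds ht.1 ht.2)).mul (continuousAt_of_step hs htb))
  have hfi {a b : ℝ} (ha : a ∈ Icc 0 ℓ) (hb : b ∈ Icc 0 ℓ) : IntervalIntegrable f volume a b :=
    (hf.mono_set (uIcc_subset_Icc ha hb)).intervalIntegrable
  have htbar' : tbar ∈ Icc 0 ℓ := Ioo_subset_Icc_self htbar
  have hℓmem : ℓ ∈ Icc 0 ℓ := ⟨hℓ.le, le_rfl⟩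
  refine ⟨hv0, fun t ht => (hleft ht).trans ?_, fun t ht => (hright ht).trans ?_⟩
  · have := intervalIntegral.integral_add_adjacent_intervals
      (hfi ⟨ht.1, ht.2.trans htbar'.2⟩ htbar') (hfi htbar' hℓmem)
    linarith
  · have := intervalIntegral.integral_add_adjacent_intervals
      (hfi htbar' ⟨htbar'.1.trans ht.1, ht.2⟩) (hfi ⟨htbar'.1.trans ht.1, ht.2⟩ hℓmem)
    linarith

theorem sandpile_uniqueness_single_edge (ℓ : ℝ) (hℓ : 0 < ℓ)
    (η f : ℝ → ℝ)
    (hη : ContinuousOn η (Set.Icc 0 ℓ)) (hηpos : ∀ t ∈ Set.Icc 0 ℓ, 0 < η t)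
    (hfmeas : Measurable f)
    (hfbd : ∃ C : ℝ, ∀ t ∈ Set.Icc 0 ℓ, |f t| ≤ C)
    (tbar : ℝ) (htbar : tbar ∈ Set.Ioo 0 ℓ)
    (hbal : (∫ r in (0:ℝ)..tbar, 1 / η r) = ∫ r in tbar..ℓ, 1 / η r)
    (s : ℝ → ℝ)
    (hs : ∀ t : ℝ, (t < tbar → s t = 1) ∧ (tbar < t → s t = -1))
    (v : ℝ → ℝ) (hv : ContinuousOn v (Set.Icc 0 ℓ))
    (hweak : ∀ ψ : ℝ → ℝ, (∃ K : NNReal, LipschitzOnWith K ψ (Set.Icc 0 ℓ)) →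
      ψ 0 = 0 → ψ ℓ = 0 →
      ∫ t in Set.Ioo 0 ℓ, v t * s t * deriv ψ t = ∫ t in Set.Ioo 0 ℓ, f t * ψ t) :
    v tbar = 0 ∧
    (∀ t ∈ Set.Icc 0 tbar, v t = ∫ r in t..tbar, f r) ∧
    (∀ t ∈ Set.Icc tbar ℓ, v t = ∫ r in tbar..t, f r) :=
  sandpile_uniqueness_single_edge_general ℓ hℓ f hfmeas hfbd tbar htbar s hs v hv hweak
end

section
/- Let $V$ be a finite type, $E:V\to V\to\mathrm{Prop}$ a symmetric adjacency relation, $B\subseteq V$ a nonempty set of boundary vertices, and $c:V\to V\to\mathbb{R}$ a cost function with $c(x,y)>0$ whenever $E\,x\,y$. Assume that from every $x\in V$ there is a finite $E$-path $x=x_0,x_1,\dots,x_n$ with $E\,x_m\,x_{m+1}$ for all $m<n$ and $x_n\in B$, and that every $x\notin B$ has at least one $E$-neighbor. Define $\delta:V\to\mathbb{R}$ by $\delta(x)=\min\big\{\sum_{m=0}^{n-1}c(x_m,x_{m+1})\ :\ x=x_0,x_1,\dots,x_n \text{ an } E\text{-path with } x_n\in B\big\}$. Then (a) $\delta(x)=0$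 for $x\in B$ and $\delta(x)=\min_{y:\,E\,x\,y}\big(c(x,y)+\delta(y)\big)$ for every $x\notin B$; and (b) if $u:V\to\mathbb{R}$ satisfies $u(x)=0$ for all $x\in B$ and $u(x)=\min_{y:\,E\,x\,y}\big(c(x,y)+u(y)\big)$ for every $x\notin B$, then $u=\delta$. -/
/-- The set of total costs of discrete paths from `x` to the boundary set `B`
along the adjacency relation `E`, with edge costs `c`. -/
def pathCosts {V : Type*} (E : V → V → Prop) (B : Set V) (c : V → V → ℝ) (x : V) : Set ℝ :=
  {r : ℝ | ∃ (n : ℕ) (p : ℕ → V), p 0 = x ∧ (∀ m < n, E (p m) (p (m + 1))) ∧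
    p n ∈ B ∧ r = ∑ m ∈ Finset.range n, c (p m) (p (m + 1))}

section aux
variable {V : Type*} {E : V → V → Prop} {B : Set V} {c : V → V → ℝ}

lemma pathCosts_nonneg (hc : ∀ x y, E x y → 0 < c x y) {x : V} {r : ℝ}
    (hr : r ∈ pathCosts E B c x) : 0 ≤ r := by
  obtain ⟨n, p, h0, hE, hBn, hsum⟩ := hr
  rw [hsum]
  exact Finset.sum_nonneg fun m hm =>
    (hc _ _ (hE m (Finset.mem_range.mp hm))).le

lemma zero_mem_pathCosts {x : V} (hx : x ∈ B) : (0 : ℝ) ∈ pathCosts E B c x :=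
  ⟨0, fun _ => x, rfl, fun m hm => absurd hm (Nat.not_lt_zero m), hx, by simp⟩

lemma pathCosts_nonempty (hreach : ∀ x : V, ∃ (n : ℕ) (p : ℕ → V), p 0 = x ∧
      (∀ m < n, E (p m) (p (m + 1))) ∧ p n ∈ B) (x : V) :
    (pathCosts E B c x).Nonempty := by
  obtain ⟨n, p, h0, hE, hBn⟩ := hreach x
  exact ⟨_, n, p, h0, hE, hBn, rfl⟩

lemma cons_mem_pathCosts {x y : V} {r : ℝ} (hxy : E x y)
    (hr : r ∈ pathCosts E B c y) : c x y + r ∈ pathCosts E B c x := by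
  obtain ⟨n, p, h0, hE, hBn, hsum⟩ := hr
  refine ⟨n + 1, fun m => Nat.rec x (fun m _ => p m) m, rfl, ?_, hBn, ?_⟩
  · intro m hm
    cases m with
    | zero => simpa [h0] using hxy
    | succ k => exact hE k (by omega)
  · rw [Finset.sum_range_succ']
    simp only [h0, hsum]
    exact add_comm _ _
end aux

theorem discrete_eikonal_wellposed {V : Type*} [Fintype V]
    (E : V → V → Prop) (hEsymm : ∀ x y, E x y → E y x)
    (B : Set V) (hB : B.Nonempty)
    (c : V → V → ℝ) (hc : ∀ x y, E x y → 0 < c x y)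
    (hreach : ∀ x : V, ∃ (n : ℕ) (p : ℕ → V), p 0 = x ∧
      (∀ m < n, E (p m) (p (m + 1))) ∧ p n ∈ B)
    (hnbr : ∀ x : V, x ∉ B → ∃ y, E x y)
    (δ : V → ℝ) (hδ : ∀ x, δ x = sInf (pathCosts E B c x)) :
    ((∀ x ∈ B, δ x = 0) ∧
      (∀ x : V, x ∉ B → δ x = sInf {r : ℝ | ∃ y, E x y ∧ r = c x y + δ y})) ∧
    (∀ u : V → ℝ, (∀ x ∈ B, u x = 0) →
      (∀ x : V, x ∉ B → u x = sInf {r : ℝ | ∃ y, E x y ∧ r = c x y + u y}) →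
      u = δ) := by
  have hbdd : ∀ x : V, BddBelow (pathCosts E B c x) :=
    fun x => ⟨0, fun r hr => pathCosts_nonneg hc hr⟩
  have hne : ∀ x : V, (pathCosts E B c x).Nonempty := pathCosts_nonempty hreach
  have hδnonneg : ∀ x, 0 ≤ δ x := fun x => by
    rw [hδ]; exact le_csInf (hne x) fun r hr => pathCosts_nonneg hc hr
  -- δ x ≤ c x y + δ y for neighbors
  have hstep : ∀ x y, E x y → δ x ≤ c x y + δ y := by
    intro x y hxy
    rw [hδ x]
    have : δ x - c x y ≤ δ y := by
      rw [hδ y]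
      refine le_csInf (hne y) fun r hr => ?_
      have := csInf_le (hbdd x) (cons_mem_pathCosts hxy hr)
      rw [← hδ x] at this
      linarith
    rw [← hδ x] at *
    linarith
  -- boundary values
  have hbval : ∀ x ∈ B, δ x = 0 := by
    intro x hx
    refine le_antisymm ?_ (hδnonneg x)
    rw [hδ]
    exact csInf_le (hbdd x) (zero_mem_pathCosts hx)
  -- Bellman equation for δ at interior points
  have hbell : ∀ x : V, x ∉ B → δ x = sInf {r : ℝ | ∃ y, E x y ∧ r = c x y + δ y} := by
    intro x hx
    obtain ⟨y₀, hy₀⟩ := hnbr x hx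
    have hNne : {r : ℝ | ∃ y, E x y ∧ r = c x y + δ y}.Nonempty :=
      ⟨c x y₀ + δ y₀, y₀, hy₀, rfl⟩
    have hNbdd : BddBelow {r : ℝ | ∃ y, E x y ∧ r = c x y + δ y} := by
      refine ⟨0, fun r hr => ?_⟩
      obtain ⟨y, hy, rfl⟩ := hr
      have := hδnonneg y
      have := hc x y hy
      linarith
    refine le_antisymm ?_ ?_
    · exact le_csInf hNne fun r hr => by
        obtain ⟨y, hy, rfl⟩ := hr; exact hstep x y hy
    · rw [hδ]
      refine le_csInf (hne x) fun r hr => ?_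
      obtain ⟨n, p, h0, hE, hBn, hsum⟩ := hr
      cases n with
      | zero => exact absurd (h0 ▸ hBn) hx
      | succ k =>
        have hE1 : E x (p 1) := h0 ▸ hE 0 (Nat.succ_pos k)
        have htail : (∑ m ∈ Finset.range k, c (p (m + 1)) (p (m + 2))) ∈
            pathCosts E B c (p 1) :=
          ⟨k, fun m => p (m + 1), rfl, fun m hm => hE (m + 1) (by omega), hBn, rfl⟩
        have h1 : δ (p 1) ≤ ∑ m ∈ Finset.range k, c (p (m + 1)) (p (m + 2)) := by
          rw [hδ]; exact csInf_le (hbdd _) htail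
        have h2 : r = c x (p 1) + ∑ m ∈ Finset.range k, c (p (m + 1)) (p (m + 2)) := by
          rw [hsum, Finset.sum_range_succ', h0]; ring
        have h3 : sInf {r : ℝ | ∃ y, E x y ∧ r = c x y + δ y} ≤ c x (p 1) + δ (p 1) :=
          csInf_le hNbdd ⟨p 1, hE1, rfl⟩
        linarith
  refine ⟨⟨hbval, hbell⟩, ?_⟩
  -- uniqueness
  intro u hu0 hubell
  -- u ≤ δ : u x is a lower bound for pathCosts
  have hule : ∀ x, u x ≤ δ x := by
    have key : ∀ n : ℕ, ∀ p : ℕ → V, (∀ m < n, E (p m) (p (m + 1))) → p n ∈ B →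
        u (p 0) ≤ ∑ m ∈ Finset.range n, c (p m) (p (m + 1)) := by
      intro n
      induction n with
      | zero => intro p _ hBn; simp [hu0 _ hBn]
      | succ k ih =>
        intro p hE hBn
        by_cases h0B : p 0 ∈ B
        · rw [hu0 _ h0B]
          exact Finset.sum_nonneg fun m hm =>
            (hc _ _ (hE m (Finset.mem_range.mp hm))).le
        · have hE1 : E (p 0) (p 1) := hE 0 (Nat.succ_pos k)
          have h1 : u (p 0) ≤ c (p 0) (p 1) + u (p 1) := by
            rw [hubell _ h0B]
            have hNbdd : BddBelow {r : ℝ | ∃ y, E (p 0) y ∧ r = c (p 0) y + u y} := by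
              classical
              have hfin : {r : ℝ | ∃ y, E (p 0) y ∧ r = c (p 0) y + u y}.Finite := by
                have : {r : ℝ | ∃ y, E (p 0) y ∧ r = c (p 0) y + u y} ⊆
                    Set.range (fun y => c (p 0) y + u y) := by
                  rintro r ⟨y, _, rfl⟩; exact ⟨y, rfl⟩
                exact (Set.finite_range _).subset this
              exact hfin.bddBelow
            exact csInf_le hNbdd ⟨p 1, hE1, rfl⟩
          have h2 : u (p 1) ≤ ∑ m ∈ Finset.range k, c (p (m + 1)) (p (m + 2)) :=
            ih (fun m => p (m + 1)) (fun m hm => hE (m + 1) (by omega)) hBn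
          rw [Finset.sum_range_succ']
          linarith
    intro x
    rw [hδ]
    refine le_csInf (hne x) fun r hr => ?_
    obtain ⟨n, p, h0, hE, hBn, hsum⟩ := hr
    rw [hsum, ← h0]
    exact key n p hE hBn
  -- attainment of the Bellman min for u
  have hattain : ∀ x : V, x ∉ B → ∃ y, E x y ∧ u x = c x y + u y := by
    classical
    intro x hx
    have hNne : {r : ℝ | ∃ y, E x y ∧ r = c x y + u y}.Nonempty := by
      obtain ⟨y, hy⟩ := hnbr x hx; exact ⟨c x y + u y, y, hy, rfl⟩
    have hfin : {r : ℝ | ∃ y, E x y ∧ r = c x y + u y}.Finite := by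
      have : {r : ℝ | ∃ y, E x y ∧ r = c x y + u y} ⊆
          Set.range (fun y => c x y + u y) := by
        rintro r ⟨y, _, rfl⟩; exact ⟨y, rfl⟩
      exact (Set.finite_range _).subset this
    have := hNne.csInf_mem hfin
    rw [← hubell x hx] at this
    exact this
  -- δ ≤ u by induction on the number of vertices with smaller u-value
  have hgle : ∀ x, δ x ≤ u x := by
    classical
    intro x
    generalize hk : (Finset.univ.filter (fun z : V => u z < u x)).card = k
    induction k using Nat.strong_induction_on generalizing x with
    | _ k ih =>
      by_cases hx : x ∈ B
      · rw [hbval x hx, hu0 x hx]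
      · obtain ⟨y, hy, huy⟩ := hattain x hx
        have hlt : u y < u x := by have := hc x y hy; linarith
        have hsub : (Finset.univ.filter (fun z : V => u z < u y)) ⊂
            (Finset.univ.filter (fun z : V => u z < u x)) := by
          refine Finset.ssubset_iff_of_subset ?_ |>.mpr ⟨y, ?_, ?_⟩
          · intro z hz
            simp only [Finset.mem_filter, Finset.mem_univ, true_and] at *
            linarith
          · simp [hlt]
          · simp
        have hcard : (Finset.univ.filter (fun z : V => u z < u y)).card < k :=
          hk ▸ Finset.card_lt_card hsub
        have hδy : δ y ≤ u y := ih _ hcard y rfl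
        have := hstep x y hy
        linarith
  exact funext fun x => le_antisymm (hule x) (hgle x)
end

section
/- Let $I$ and $J$ be finite types, with endpoint maps $a,b:J\to I$ satisfying $a(j)\ne b(j)$, signs $p,q:J\to\{-1,1\}$ and $s:J\to\{0,1\}$ with, for every $j$: $s(j)=0$ iff $p(j)+q(j)=0$ and $s(j)=1$ iff $p(j)=q(j)=1$; define $N^{\pm}(i)$ as the number of edge-endpoint incidences at $i$ with sign $\pm1$. Suppose $I$ is partitioned as $I=I_B\sqcup I_T$ with $I_B$ nonempty (boundary and transition vertices), and let $M\subseteq I_T$ (the local-maximum vertices) be such that: $N^{-}(i)=0$ and $N^{+}(i)\ge1$ for every $i\in I_B$; $N^{+}(i)=0$ and $N^{-}(i)\ge2$ for every $i\in M$; and $N^{+}(i)\ge1$ and $N^{-}(i)\ge1$ for every $i\in I_T\setminus M$. Then, setting $\#S:=\sum_{j\in J}s(j)+\#M$, one has $\#I-\#J\le\#S\le\#J-\#I_T$. -/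
/-- Number of edge-endpoint incidences at vertex `i` with sign `+1`. -/
def Nplus {I J : Type*} [Fintype J] [DecidableEq I]
    (a b : J → I) (p q : J → ℤ) (i : I) : ℕ :=
  (Finset.univ.filter fun j : J => a j = i ∧ p j = 1).card +
  (Finset.univ.filter fun j : J => b j = i ∧ q j = 1).card

/-- Number of edge-endpoint incidences at vertex `i` with sign `-1`. -/
def Nminus {I J : Type*} [Fintype J] [DecidableEq I]
    (a b : J → I) (p q : J → ℤ) (i : I) : ℕ :=
  (Finset.univ.filter fun j : J => a j = i ∧ p j = -1).card +
  (Finset.univ.filter fun j : J => b j = i ∧ q j = -1).card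

lemma sum_filter_card_aux {I J : Type*} [Fintype I] [Fintype J] [DecidableEq I]
    (f : J → I) (P : J → Prop) [DecidablePred P] :
    ∑ i : I, (Finset.univ.filter fun j => f j = i ∧ P j).card
      = ∑ j : J, (if P j then 1 else 0) := by
  simp only [Finset.card_filter]
  rw [Finset.sum_comm]
  refine Finset.sum_congr rfl fun j _ => ?_
  by_cases h : P j <;> simp [h]

lemma sum_Nplus {I J : Type*} [Fintype I] [Fintype J] [DecidableEq I]
    (a b : J → I) (p q : J → ℤ) :
    ∑ i : I, Nplus a b p q i
      = ∑ j : J, ((if p j = 1 then 1 else 0) + (if q j = 1 then 1 else 0)) := by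
  unfold Nplus
  rw [Finset.sum_add_distrib, sum_filter_card_aux, sum_filter_card_aux,
    Finset.sum_add_distrib]

lemma sum_Nminus {I J : Type*} [Fintype I] [Fintype J] [DecidableEq I]
    (a b : J → I) (p q : J → ℤ) :
    ∑ i : I, Nminus a b p q i
      = ∑ j : J, ((if p j = -1 then 1 else 0) + (if q j = -1 then 1 else 0)) := by
  unfold Nminus
  rw [Finset.sum_add_distrib, sum_filter_card_aux, sum_filter_card_aux,
    Finset.sum_add_distrib]

theorem singular_set_cardinality_bounds {I J : Type*} [Fintype I] [Fintype J] [DecidableEq I]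
    (a b : J → I) (hab : ∀ j, a j ≠ b j)
    (p q : J → ℤ) (hp : ∀ j, p j = 1 ∨ p j = -1) (hq : ∀ j, q j = 1 ∨ q j = -1)
    (s : J → ℕ) (hs01 : ∀ j, s j = 0 ∨ s j = 1)
    (hs0 : ∀ j, s j = 0 ↔ p j + q j = 0)
    (hs1 : ∀ j, s j = 1 ↔ (p j = 1 ∧ q j = 1))
    (IB : Finset I) (hIBne : IB.Nonempty)
    (M : Finset I) (hM : M ⊆ IBᶜ)
    (hbd : ∀ i ∈ IB, Nminus a b p q i = 0 ∧ 1 ≤ Nplus a b p q i)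
    (hmax : ∀ i ∈ M, Nplus a b p q i = 0 ∧ 2 ≤ Nminus a b p q i)
    (htrans : ∀ i ∈ IBᶜ \ M, 1 ≤ Nplus a b p q i ∧ 1 ≤ Nminus a b p q i) :
    (Fintype.card I : ℤ) - Fintype.card J ≤ (∑ j : J, (s j : ℤ)) + M.card ∧
    (∑ j : J, (s j : ℤ)) + M.card ≤ (Fintype.card J : ℤ) - IBᶜ.card := by
  -- per-edge contributions
  have hplus : ∑ i : I, Nplus a b p q i = Fintype.card J + ∑ j : J, s j := by
    rw [sum_Nplus]
    rw [show Fintype.card J = ∑ _j : J, 1 from (by simp)]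
    rw [← Finset.sum_add_distrib]
    refine Finset.sum_congr rfl fun j _ => ?_
    rcases hp j with h1 | h1 <;> rcases hq j with h2 | h2
    · have : s j = 1 := (hs1 j).mpr ⟨h1, h2⟩
      simp [h1, h2, this]
    · have : s j = 0 := (hs0 j).mpr (by rw [h1, h2]; ring)
      simp [h1, h2, this]
    · have : s j = 0 := (hs0 j).mpr (by rw [h1, h2]; ring)
      simp [h1, h2, this]
    · exfalso
      rcases hs01 j with h | h
      · have := (hs0 j).mp h; rw [h1, h2] at this; norm_num at this
      · have := ((hs1 j).mp h).1; rw [h1] at this; norm_num at this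
  have hminus : ∑ i : I, Nminus a b p q i + ∑ j : J, s j = Fintype.card J := by
    rw [sum_Nminus]
    rw [show Fintype.card J = ∑ _j : J, 1 from (by simp)]
    rw [← Finset.sum_add_distrib]
    refine Finset.sum_congr rfl fun j _ => ?_
    rcases hp j with h1 | h1 <;> rcases hq j with h2 | h2
    · have : s j = 1 := (hs1 j).mpr ⟨h1, h2⟩
      simp [h1, h2, this]
    · have : s j = 0 := (hs0 j).mpr (by rw [h1, h2]; ring)
      simp [h1, h2, this]
    · have : s j = 0 := (hs0 j).mpr (by rw [h1, h2]; ring)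
      simp [h1, h2, this]
    · exfalso
      rcases hs01 j with h | h
      · have := (hs0 j).mp h; rw [h1, h2] at this; norm_num at this
      · have := ((hs1 j).mp h).1; rw [h1] at this; norm_num at this
  -- lower bound: card I ≤ M.card + ∑ Nplus
  have hlow : Fintype.card I ≤ M.card + (Fintype.card J + ∑ j : J, s j) := by
    rw [← hplus]
    have h1 : (Finset.univ \ M).card ≤ ∑ i ∈ Finset.univ \ M, Nplus a b p q i := by
      rw [Finset.card_eq_sum_ones]
      refine Finset.sum_le_sum fun i hi => ?_
      rcases Finset.mem_sdiff.mp hi with ⟨_, hiM⟩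
      by_cases hB : i ∈ IB
      · exact (hbd i hB).2
      · exact (htrans i (Finset.mem_sdiff.mpr ⟨Finset.mem_compl.mpr hB, hiM⟩)).1
    have h2 : ∑ i ∈ Finset.univ \ M, Nplus a b p q i ≤ ∑ i : I, Nplus a b p q i :=
      Finset.sum_le_sum_of_subset (Finset.sdiff_subset)
    have h0 : M.card ≤ Fintype.card I := by
      simpa using Finset.card_le_card (Finset.subset_univ M)
    have h3 : (Finset.univ \ M).card = Fintype.card I - M.card := by
      rw [Finset.card_sdiff_of_subset (Finset.subset_univ M), Finset.card_univ]
    omega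
  -- upper bound: IBᶜ.card + M.card ≤ ∑ Nminus
  have hhigh : IBᶜ.card + M.card ≤ ∑ i : I, Nminus a b p q i := by
    have hsplit : IBᶜ = M ∪ (IBᶜ \ M) := by
      rw [Finset.union_sdiff_of_subset hM]
    have hdisj : Disjoint M (IBᶜ \ M) := Finset.disjoint_sdiff
    have h1 : ∑ i ∈ M, Nminus a b p q i + ∑ i ∈ IBᶜ \ M, Nminus a b p q i
        = ∑ i ∈ IBᶜ, Nminus a b p q i := by
      rw [← Finset.sum_union hdisj, ← hsplit]
    have h2 : 2 * M.card ≤ ∑ i ∈ M, Nminus a b p q i := by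
      rw [Finset.card_eq_sum_ones, Finset.mul_sum]
      exact Finset.sum_le_sum fun i hi => by simpa using (hmax i hi).2
    have h3 : (IBᶜ \ M).card ≤ ∑ i ∈ IBᶜ \ M, Nminus a b p q i := by
      rw [Finset.card_eq_sum_ones]
      exact Finset.sum_le_sum fun i hi => (htrans i hi).2
    have h4 : (IBᶜ \ M).card = IBᶜ.card - M.card := Finset.card_sdiff_of_subset hM
    have h5 : M.card ≤ IBᶜ.card := Finset.card_le_card hM
    have h6 : ∑ i ∈ IBᶜ, Nminus a b p q i ≤ ∑ i : I, Nminus a b p q i :=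
      Finset.sum_le_sum_of_subset (Finset.subset_univ _)
    omega
  constructor
  · have : (Fintype.card I : ℤ) ≤ M.card + (Fintype.card J + ∑ j : J, (s j : ℤ)) := by
      have := hlow
      push_cast [← Nat.cast_sum]
      exact_mod_cast hlow
    linarith
  · have h : (IBᶜ.card : ℤ) + M.card + ∑ j : J, (s j : ℤ) ≤ Fintype.card J := by
      have := hminus
      have h7 : IBᶜ.card + M.card + ∑ j : J, s j ≤ Fintype.card J := by omega
      exact_mod_cast h7
    linarith
end
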